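/- arXiv:1111.2401 — 13 statements merged into one kernel-verified Lean document; each statement's English description precedes it below -/
import Mathlib

section
/- For all g, h, k, l in a linearly ordered group G, the composition of the partial bijections α_h^g and α_l^k (applying α_h^g first) equals α_b^a, where a = (h ∨ k)·h⁻¹·g and b = (h ∨ k)·k⁻¹·l. Consequently the set 𝓑(G) = {α_h^g : g, h ∈ G} of such partial bijections is closed under composition of partial maps. -/
variable {G : Type*} [Group G] [LinearOrder G]
  [CovariantClass G G (· * ·) (· ≤ ·)] [CovariantClass G G (Function.swap (· * ·)) (· ≤ ·)]

/-- The partial bijection `α_h^g` of `G` with domain the positive cone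
`G⁺(g) = {x | g ≤ x}`, given by `x ↦ x·g⁻¹·h`. -/
def alphaMap (g h : G) : G →. G := fun x => ⟨g ≤ x, fun _ => x * g⁻¹ * h⟩

/-- The family `𝓑(G)` of all partial bijections `α_h^g`. -/
def BGset (G : Type*) [Group G] [LinearOrder G] : Set (G →. G) :=
  {p | ∃ g h : G, p = alphaMap g h}

section

variable {G : Type*} [Group G] [LinearOrder G]

theorem mem_alphaMap_iff {g h x y : G} : y ∈ alphaMap g h x ↔ g ≤ x ∧ x * g⁻¹ * h = y := by
  simp only [alphaMap, Part.mem_mk_iff, exists_prop]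

variable [MulRightMono G]

theorem mul_inv_mul_le_mul_inv_mul_iff (g h : G) {a b : G} :
    a * g⁻¹ * h ≤ b * g⁻¹ * h ↔ a ≤ b := by
  simp only [mul_assoc]
  exact mul_le_mul_iff_right _

/-- `x ↦ x·g⁻¹·h` is an order automorphism sending `g` to `h`, so the domain
`G⁺(g) ∩ (α_h^g)⁻¹(G⁺(k))` of the composite is the preimage of `G⁺(h) ∩ G⁺(k) = G⁺(h ∨ k)`. -/
theorem le_and_le_mul_inv_mul_iff (g h k x : G) :
    g ≤ x ∧ k ≤ x * g⁻¹ * h ↔ max h k * h⁻¹ * g ≤ x := by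
  calc g ≤ x ∧ k ≤ x * g⁻¹ * h ↔ h ≤ x * g⁻¹ * h ∧ k ≤ x * g⁻¹ * h := by
        rw [← mul_inv_mul_le_mul_inv_mul_iff g h, mul_inv_cancel, one_mul]
    _ ↔ max h k ≤ x * g⁻¹ * h := max_le_iff.symm
    _ ↔ max h k * h⁻¹ * g ≤ x := by
        rw [← mul_inv_mul_le_mul_inv_mul_iff g h (a := max h k * h⁻¹ * g), mul_inv_cancel_right,
          inv_mul_cancel_right]

theorem alphaMap_comp_alphaMap (g h k l : G) :
    (alphaMap k l).comp (alphaMap g h) = alphaMap (max h k * h⁻¹ * g) (max h k * k⁻¹ * l) := by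
  refine PFun.ext fun x y => ?_
  rw [PFun.comp_apply]
  refine Part.mem_bind_iff.trans ?_
  simp only [mem_alphaMap_iff]
  constructor
  · rintro ⟨_, ⟨hg, rfl⟩, hk, rfl⟩
    exact ⟨(le_and_le_mul_inv_mul_iff g h k x).1 ⟨hg, hk⟩, by group⟩
  · rintro ⟨hx, rfl⟩
    obtain ⟨hg, hk⟩ := (le_and_le_mul_inv_mul_iff g h k x).2 hx
    exact ⟨_, ⟨hg, rfl⟩, hk, by group⟩

theorem comp_mem_BGset {p q : G →. G} (hp : p ∈ BGset G) (hq : q ∈ BGset G) :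
    q.comp p ∈ BGset G := by
  obtain ⟨g, h, rfl⟩ := hp
  obtain ⟨k, l, rfl⟩ := hq
  exact ⟨_, _, alphaMap_comp_alphaMap g h k l⟩

end

theorem stmt0_general {G : Type*} [Group G] [LinearOrder G]
    [CovariantClass G G (Function.swap (· * ·)) (· ≤ ·)] (g h k l : G) :
    PFun.comp (alphaMap k l) (alphaMap g h) =
      alphaMap (max h k * h⁻¹ * g) (max h k * k⁻¹ * l) ∧
    ∀ p ∈ BGset G, ∀ q ∈ BGset G, PFun.comp q p ∈ BGset G :=
  ⟨alphaMap_comp_alphaMap g h k l, fun _ hp _ hq => comp_mem_BGset hp hq⟩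

/-- Composing `α_h^g` first and then `α_l^k` gives `α_b^a` with `a = (h ∨ k)·h⁻¹·g` and
`b = (h ∨ k)·k⁻¹·l`; consequently `𝓑(G)` is closed under composition of partial maps. -/
theorem stmt0 {G : Type*} [Group G] [LinearOrder G]
    [CovariantClass G G (· * ·) (· ≤ ·)]
    [CovariantClass G G (Function.swap (· * ·)) (· ≤ ·)] (g h k l : G) :
    PFun.comp (alphaMap k l) (alphaMap g h) =
      alphaMap (max h k * h⁻¹ * g) (max h k * k⁻¹ * l) ∧
    ∀ p ∈ BGset G, ∀ q ∈ BGset G, PFun.comp q p ∈ BGset G :=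
  stmt0_general g h k l
end

section
/- For a linearly ordered group G, the multiplication on S_G = G × G given by (a,b)·(c,d) = (c·b⁻¹·a, d) if b < c; (a,d) if b = c; (a, b·c⁻¹·d) if b > c, is associative; for every x = (a,b) ∈ S_G the element y = (b,a) satisfies x·y·x = x and y·x·y = y, and y is the unique element of S_G with these two properties (so S_G is an inverse semigroup); moreover an element (g,h) ∈ S_G satisfies (g,h)·(g,h) = (g,h) if and only if g = h. -/
variable {G : Type*} [Group G] [LinearOrder G]
  [CovariantClass G G (· * ·) (· ≤ ·)] [CovariantClass G G (Function.swap (· * ·)) (· ≤ ·)]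

/-- The multiplication of the semigroup `S_G` on `G × G`:
`(a,b)·(c,d) = (c·b⁻¹·a, d)` if `b < c`; `(a,d)` if `b = c`; `(a, b·c⁻¹·d)` if `b > c`. -/
def Smul (x y : G × G) : G × G :=
  if x.2 < y.1 then (y.1 * x.2⁻¹ * x.1, y.2)
  else if x.2 = y.1 then (x.1, y.2)
  else (x.1, x.2 * y.1⁻¹ * y.2)

/-!
Writing `m = b ⊔ c`, the three cases of the definition collapse into the single formula
`(a,b)·(c,d) = (m·b⁻¹·a, m·c⁻¹·d)`. Since right multiplication distributes over `⊔`,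
associativity reduces to associativity of `⊔`. For `x = (a,b)` and `y = (c,d)` the same formula
shows that `x·y·x = x` forces `d ≤ a` and `c = d·a⁻¹·b`, and symmetrically `y·x·y = y` forces
`b ≤ c`; then `c = d·a⁻¹·b ≤ b`, so `c = b` and `d = a`.
-/

section

variable {α : Type*} [Group α] [LinearOrder α]

theorem Smul_eq_sup (x y : α × α) :
    Smul x y = ((x.2 ⊔ y.1) * x.2⁻¹ * x.1, (x.2 ⊔ y.1) * y.1⁻¹ * y.2) := by
  unfold Smul
  split_ifs with hlt heq
  · simp [sup_of_le_right hlt.le]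
  · simp [heq]
  · simp [sup_of_le_left (not_lt.mp hlt)]

theorem Smul_assoc [MulRightMono α] (x y z : α × α) :
    Smul (Smul x y) z = Smul x (Smul y z) := by
  have hsup : (x.2 ⊔ y.1) * y.1⁻¹ * y.2 ⊔ z.1
      = (x.2 ⊔ (y.2 ⊔ z.1) * y.2⁻¹ * y.1) * y.1⁻¹ * y.2 := by
    simp only [sup_mul, mul_assoc, mul_inv_cancel, inv_mul_cancel, mul_one, sup_assoc]
  simp only [Smul_eq_sup, hsup]
  exact Prod.ext (by group) (by group)

theorem Smul_Smul_swap_self (x : α × α) : Smul (Smul x (x.2, x.1)) x = x := by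
  simp [Smul_eq_sup]

theorem Smul_self_eq_self_iff (g h : α) : Smul (g, h) (g, h) = (g, h) ↔ g = h := by
  refine ⟨fun hidem => ?_, fun hgh => by simp [Smul_eq_sup, hgh]⟩
  simp only [Smul_eq_sup, Prod.mk.injEq, mul_eq_right, mul_inv_eq_one] at hidem
  exact hidem.2.symm.trans hidem.1

theorem snd_le_and_fst_eq_of_Smul_Smul_eq_self [MulRightMono α] {x y : α × α}
    (h : Smul (Smul x y) x = x) : y.2 ≤ x.1 ∧ y.1 = y.2 * x.1⁻¹ * x.2 := by
  obtain ⟨a, b⟩ := x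
  obtain ⟨c, d⟩ := y
  simp only [Smul_eq_sup, Prod.mk.injEq] at h ⊢
  obtain ⟨hfst, hsnd⟩ := h
  have hn : (b ⊔ c) * c⁻¹ * d ⊔ a = a := by
    rwa [mul_eq_right, mul_inv_eq_one] at hsnd
  rw [hn] at hfst
  have hda : d ≤ a := calc
    d = c * c⁻¹ * d := by group
    _ ≤ (b ⊔ c) * c⁻¹ * d := mul_le_mul_left (mul_le_mul_left le_sup_right _) _
    _ ≤ a := sup_eq_right.mp hn
  have hone : a * d⁻¹ * c * b⁻¹ = 1 := mul_eq_right.mp <| calc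
    a * d⁻¹ * c * b⁻¹ * a = a * ((b ⊔ c) * c⁻¹ * d)⁻¹ * ((b ⊔ c) * b⁻¹ * a) := by group
    _ = a := hfst
  refine ⟨hda, ?_⟩
  calc c = d * a⁻¹ * (a * d⁻¹ * c * b⁻¹) * b := by group
    _ = d * a⁻¹ * b := by rw [hone, mul_one]

theorem eq_swap_of_Smul_Smul_eq_self [MulRightMono α] {x y : α × α}
    (hx : Smul (Smul x y) x = x) (hy : Smul (Smul y x) y = y) : y = (x.2, x.1) := by
  obtain ⟨hyx, hc⟩ := snd_le_and_fst_eq_of_Smul_Smul_eq_self hx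
  obtain ⟨hxy, -⟩ := snd_le_and_fst_eq_of_Smul_Smul_eq_self hy
  have hle : y.1 ≤ x.2 := by
    simpa [hc, mul_assoc] using mul_le_mul_left hyx (x.1⁻¹ * x.2)
  have hfst : y.1 = x.2 := le_antisymm hle hxy
  have hsnd : y.2 = x.1 := by
    rw [hfst, eq_comm, mul_eq_right, mul_inv_eq_one] at hc
    exact hc
  exact Prod.ext hfst hsnd

end

theorem stmt1_general {G : Type*} [Group G] [LinearOrder G]
    [CovariantClass G G (Function.swap (· * ·)) (· ≤ ·)] :
    (∀ x y z : G × G, Smul (Smul x y) z = Smul x (Smul y z)) ∧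
    (∀ x : G × G,
      Smul (Smul x (x.2, x.1)) x = x ∧
      Smul (Smul (x.2, x.1) x) (x.2, x.1) = (x.2, x.1) ∧
      ∀ y : G × G, Smul (Smul x y) x = x → Smul (Smul y x) y = y → y = (x.2, x.1)) ∧
    (∀ g h : G, Smul (g, h) (g, h) = (g, h) ↔ g = h) :=
  ⟨Smul_assoc, fun x => ⟨Smul_Smul_swap_self x, Smul_Smul_swap_self (x.2, x.1),
    fun _ => eq_swap_of_Smul_Smul_eq_self⟩, Smul_self_eq_self_iff⟩

/-- The multiplication of `S_G` is associative; every `x = (a,b)` has `y = (b,a)` as its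
unique "inverse" (`x·y·x = x` and `y·x·y = y`), so `S_G` is an inverse semigroup; and
`(g,h)` is idempotent iff `g = h`. -/
theorem stmt1 {G : Type*} [Group G] [LinearOrder G]
    [CovariantClass G G (· * ·) (· ≤ ·)]
    [CovariantClass G G (Function.swap (· * ·)) (· ≤ ·)] :
    (∀ x y z : G × G, Smul (Smul x y) z = Smul x (Smul y z)) ∧
    (∀ x : G × G,
      Smul (Smul x (x.2, x.1)) x = x ∧
      Smul (Smul (x.2, x.1) x) (x.2, x.1) = (x.2, x.1) ∧
      ∀ y : G × G, Smul (Smul x y) x = x → Smul (Smul y x) y = y → y = (x.2, x.1)) ∧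
    (∀ g h : G, Smul (g, h) (g, h) = (g, h) ↔ g = h) :=
  stmt1_general
end

section
/- For a linearly ordered group G, the idempotents of the semigroup S_G are exactly the diagonal pairs (g,g); for idempotents, (g,g)·(h,h) = (h,h)·(g,g) = (g,g) holds if and only if h ≤ g in G; and the map (g,g) ↦ g is a multiplicative isomorphism from the set of idempotents of S_G (under the multiplication of S_G) onto G equipped with the binary operation max. In particular the idempotents of S_G form a linearly ordered semilattice. -/
/-!
Everything follows from the product of two diagonal pairs: `(g,g)·(h,h) = (max g h, max g h)`.
An off-diagonal pair `(a,b)` is not idempotent, since squaring it multiplies one coordinate by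
`a·b⁻¹` or `b·a⁻¹`, which is not `1`.
-/

variable {G : Type*} [Group G] [LinearOrder G]
  [CovariantClass G G (· * ·) (· ≤ ·)] [CovariantClass G G (Function.swap (· * ·)) (· ≤ ·)]

theorem Smul_self_eq_self_iff_s2 {G : Type*} [Group G] [LinearOrder G] (x : G × G) :
    Smul x x = x ↔ x.1 = x.2 := by
  obtain ⟨a, b⟩ := x
  refine ⟨fun h => ?_, fun h => by simp_all [Smul]⟩
  dsimp only [Smul] at h
  split_ifs at h with hlt heq
  · exact absurd (mul_inv_eq_one.mp (mul_eq_right.mp (congrArg Prod.fst h))) hlt.ne'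
  · exact heq.symm
  · exact absurd (mul_inv_eq_one.mp (mul_eq_right.mp (congrArg Prod.snd h))) heq

theorem Smul_diag {G : Type*} [Group G] [LinearOrder G] (g h : G) :
    Smul (g, g) (h, h) = (max g h, max g h) := by
  dsimp only [Smul]
  split_ifs with hlt heq
  · simp [max_eq_right hlt.le]
  · simp [heq]
  · simp [max_eq_left (not_lt.mp hlt)]

theorem eq_diag_of_Smul_self {G : Type*} [Group G] [LinearOrder G] {x : G × G}
    (hx : Smul x x = x) : x = (x.1, x.1) :=
  Prod.ext rfl ((Smul_self_eq_self_iff_s2 x).mp hx).symm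

def idempotentEquiv {G : Type*} [Group G] [LinearOrder G] :
    {x : G × G // Smul x x = x} ≃ G where
  toFun x := x.1.1
  invFun g := ⟨(g, g), (Smul_self_eq_self_iff_s2 _).mpr rfl⟩
  left_inv x := Subtype.ext (eq_diag_of_Smul_self x.2).symm
  right_inv _ := rfl

theorem stmt2_general {G : Type*} [Group G] [LinearOrder G] :
    (∀ x : G × G, Smul x x = x ↔ x.1 = x.2) ∧
    (∀ g h : G, (Smul (g, g) (h, h) = (g, g) ∧ Smul (h, h) (g, g) = (g, g)) ↔ h ≤ g) ∧
    Function.Bijective (fun x : {x : G × G // Smul x x = x} => x.1.1) ∧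
    (∀ x y : {x : G × G // Smul x x = x}, (Smul x.1 y.1).1 = max x.1.1 y.1.1) ∧
    (∀ x y : {x : G × G // Smul x x = x},
      Smul x.1 y.1 = Smul y.1 x.1 ∧ (Smul x.1 y.1 = x.1 ∨ Smul x.1 y.1 = y.1)) := by
  refine ⟨Smul_self_eq_self_iff_s2, fun g h => ?_, idempotentEquiv.bijective,
    fun x y => ?_, fun x y => ?_⟩
  · simp only [Smul_diag, max_comm h g, and_self, Prod.mk.injEq, max_eq_left_iff]
  · rw [eq_diag_of_Smul_self x.2, eq_diag_of_Smul_self y.2, Smul_diag]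
  · rw [eq_diag_of_Smul_self x.2, eq_diag_of_Smul_self y.2, Smul_diag, Smul_diag, max_comm]
    rcases le_total x.1.1 y.1.1 with hle | hle
    · simp [max_eq_left hle]
    · simp [max_eq_right hle]

/-- The idempotents of `S_G` are exactly the diagonal pairs; `(g,g)·(h,h) = (h,h)·(g,g) = (g,g)`
iff `h ≤ g`; and `(g,g) ↦ g` is a multiplicative bijection from the idempotents of `S_G`
onto `(G, max)`; in particular the idempotents form a linearly ordered semilattice. -/
theorem stmt2 {G : Type*} [Group G] [LinearOrder G]
    [CovariantClass G G (· * ·) (· ≤ ·)]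
    [CovariantClass G G (Function.swap (· * ·)) (· ≤ ·)] :
    (∀ x : G × G, Smul x x = x ↔ x.1 = x.2) ∧
    (∀ g h : G, (Smul (g, g) (h, h) = (g, g) ∧ Smul (h, h) (g, g) = (g, g)) ↔ h ≤ g) ∧
    Function.Bijective (fun x : {x : G × G // Smul x x = x} => x.1.1) ∧
    (∀ x y : {x : G × G // Smul x x = x}, (Smul x.1 y.1).1 = max x.1.1 y.1.1) ∧
    (∀ x y : {x : G × G // Smul x x = x},
      Smul x.1 y.1 = Smul y.1 x.1 ∧ (Smul x.1 y.1 = x.1 ∨ Smul x.1 y.1 = y.1)) :=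
  stmt2_general
end

section
/- For a linearly ordered group G and elements (a,b), (c,d) of the semigroup S_G: the principal right ideals satisfy R((a,b)) = R((c,d)) if and only if a = c; the principal left ideals satisfy L((a,b)) = L((c,d)) if and only if b = d; consequently R((a,b)) = R((c,d)) and L((a,b)) = L((c,d)) both hold if and only if (a,b) = (c,d), i.e. every 𝓗-class of S_G is a singleton. -/
/-!
Right multiplication never decreases the first coordinate, and every pair `(x, y)` with `a ≤ x`
is reached from `(a, b)` as `(a, b)·(x·a⁻¹·b, y)`; hence `R((a, b))` is the half-plane
`{(x, y) | a ≤ x}`, which determines `a`. Dually `L((a, b)) = {(x, y) | b ≤ y}`, and a pair is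
determined by its two coordinates.
-/

variable {G : Type*} [Group G] [LinearOrder G]
  [CovariantClass G G (· * ·) (· ≤ ·)] [CovariantClass G G (Function.swap (· * ·)) (· ≤ ·)]

/-- The principal right ideal `R(x) = {x} ∪ x·S` of `x` in the semigroup `(S, m)`. -/
def Rset {S : Type*} (m : S → S → S) (x : S) : Set S := {x} ∪ {y | ∃ s : S, y = m x s}

/-- The principal left ideal `L(x) = {x} ∪ S·x` of `x` in the semigroup `(S, m)`. -/
def Lset {S : Type*} (m : S → S → S) (x : S) : Set S := {x} ∪ {y | ∃ s : S, y = m s x}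

section
variable {G : Type*} [Group G] [LinearOrder G] [MulRightMono G]

lemma fst_le_fst_Smul (x y : G × G) : x.1 ≤ (Smul x y).1 := by
  unfold Smul
  split_ifs with hlt
  · exact le_mul_of_one_le_left' (le_mul_inv_iff_le.mpr hlt.le)
  all_goals exact le_rfl

lemma snd_le_snd_Smul (x y : G × G) : y.2 ≤ (Smul x y).2 := by
  unfold Smul
  split_ifs with hlt heq
  · exact le_rfl
  · exact le_rfl
  · exact le_mul_of_one_le_left' (le_mul_inv_iff_le.mpr (not_lt.mp hlt))

lemma Smul_mk_mul_inv_mul {a x : G} (h : a ≤ x) (b y : G) :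
    Smul (a, b) (x * a⁻¹ * b, y) = (x, y) := by
  have hb : b ≤ x * a⁻¹ * b := le_mul_of_one_le_left' (le_mul_inv_iff_le.mpr h)
  unfold Smul
  split_ifs with hlt heq
  · simp
  · rw [eq_comm, mul_eq_right, mul_inv_eq_one] at heq
    rw [heq]
  · exact absurd (hb.lt_of_ne heq) hlt

lemma Smul_mul_inv_mul_mk {b y : G} (h : b ≤ y) (a x : G) :
    Smul (x, y * b⁻¹ * a) (a, b) = (x, y) := by
  have ha : a ≤ y * b⁻¹ * a := le_mul_of_one_le_left' (le_mul_inv_iff_le.mpr h)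
  unfold Smul
  split_ifs with hlt heq
  · exact absurd hlt (not_lt.mpr ha)
  · rw [mul_eq_right, mul_inv_eq_one] at heq
    rw [heq]
  · simp

lemma Rset_Smul (a b : G) :
    Rset (Smul (G := G)) (a, b) = Prod.fst ⁻¹' Set.Ici a := by
  ext p
  constructor
  · rintro (rfl | ⟨s, rfl⟩)
    · exact le_rfl
    · exact fst_le_fst_Smul (a, b) s
  · exact fun h ↦ Or.inr ⟨_, (Smul_mk_mul_inv_mul h b p.2).symm⟩

lemma Lset_Smul (a b : G) :
    Lset (Smul (G := G)) (a, b) = Prod.snd ⁻¹' Set.Ici b := by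
  ext p
  constructor
  · rintro (rfl | ⟨s, rfl⟩)
    · exact le_rfl
    · exact snd_le_snd_Smul s (a, b)
  · exact fun h ↦ Or.inr ⟨_, (Smul_mul_inv_mul_mk h a p.1).symm⟩

lemma Rset_Smul_eq_iff (a b c d : G) :
    Rset (Smul (G := G)) (a, b) = Rset (Smul (G := G)) (c, d) ↔ a = c := by
  rw [Rset_Smul, Rset_Smul, (Set.preimage_injective.mpr Prod.fst_surjective).eq_iff, Set.Ici_inj]

lemma Lset_Smul_eq_iff (a b c d : G) :
    Lset (Smul (G := G)) (a, b) = Lset (Smul (G := G)) (c, d) ↔ b = d := by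
  rw [Lset_Smul, Lset_Smul, (Set.preimage_injective.mpr Prod.snd_surjective).eq_iff, Set.Ici_inj]

end

theorem stmt3_general {G : Type*} [Group G] [LinearOrder G]
    [CovariantClass G G (Function.swap (· * ·)) (· ≤ ·)] (a b c d : G) :
    (Rset (Smul (G := G)) (a, b) = Rset (Smul (G := G)) (c, d) ↔ a = c) ∧
    (Lset (Smul (G := G)) (a, b) = Lset (Smul (G := G)) (c, d) ↔ b = d) ∧
    ((Rset (Smul (G := G)) (a, b) = Rset (Smul (G := G)) (c, d) ∧
      Lset (Smul (G := G)) (a, b) = Lset (Smul (G := G)) (c, d)) ↔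
        ((a, b) : G × G) = (c, d)) := by
  rw [Rset_Smul_eq_iff, Lset_Smul_eq_iff, Prod.mk.injEq]
  exact ⟨Iff.rfl, Iff.rfl, Iff.rfl⟩

/-- In `S_G`: `R((a,b)) = R((c,d))` iff `a = c`; `L((a,b)) = L((c,d))` iff `b = d`;
and both hold iff `(a,b) = (c,d)`, i.e. every `𝓗`-class is a singleton. -/
theorem stmt3 {G : Type*} [Group G] [LinearOrder G]
    [CovariantClass G G (· * ·) (· ≤ ·)]
    [CovariantClass G G (Function.swap (· * ·)) (· ≤ ·)] (a b c d : G) :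
    (Rset (Smul (G := G)) (a, b) = Rset (Smul (G := G)) (c, d) ↔ a = c) ∧
    (Lset (Smul (G := G)) (a, b) = Lset (Smul (G := G)) (c, d) ↔ b = d) ∧
    ((Rset (Smul (G := G)) (a, b) = Rset (Smul (G := G)) (c, d) ∧
      Lset (Smul (G := G)) (a, b) = Lset (Smul (G := G)) (c, d)) ↔
        ((a, b) : G × G) = (c, d)) :=
  stmt3_general a b c d
end

section
/- For a linearly ordered group G, the semigroup S_G is simple and bisimple: for all x, y ∈ S_G there exist u, v ∈ S_G with u·x·v = y, and there exists z ∈ S_G with L(x) = L(z) and R(z) = R(y) (i.e. any two elements of S_G are 𝓓-equivalent). The same holds for the semigroup S_G⁺ on the positive cone. -/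
variable {G : Type*} [Group G] [LinearOrder G]
  [CovariantClass G G (· * ·) (· ≤ ·)] [CovariantClass G G (Function.swap (· * ·)) (· ≤ ·)]

/-- The carrier of the semigroup `S_G⁺` on the positive cone `G⁺ = {x | 1 ≤ x}`. -/
abbrev PosS (G : Type*) [Group G] [LinearOrder G] : Type _ :=
  {p : G × G // 1 ≤ p.1 ∧ 1 ≤ p.2}

theorem smul_mem {x y : G × G} (hx : 1 ≤ x.1 ∧ 1 ≤ x.2) (hy : 1 ≤ y.1 ∧ 1 ≤ y.2) :
    1 ≤ (Smul x y).1 ∧ 1 ≤ (Smul x y).2 := by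
  unfold Smul
  split_ifs with h1 h2
  · refine ⟨?_, hy.2⟩
    have h3 : (1 : G) ≤ y.1 * x.2⁻¹ := by
      have h4 := mul_le_mul_left h1.le x.2⁻¹
      rwa [mul_inv_cancel] at h4
    exact one_le_mul h3 hx.1
  · exact ⟨hx.1, hy.2⟩
  · refine ⟨hx.1, ?_⟩
    have h3 : (1 : G) ≤ x.2 * y.1⁻¹ := by
      have h4 := mul_le_mul_left (not_lt.mp h1) y.1⁻¹
      rwa [mul_inv_cancel] at h4
    exact one_le_mul h3 hy.2

/-- The multiplication of the semigroup `S_G⁺`. -/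
def SmulP (x y : PosS G) : PosS G := ⟨Smul x.1 y.1, smul_mem x.2 y.2⟩

/-!
Multiplying `x = (a, b)` on the right can only increase the first coordinate, and every larger
first coordinate is reached: `x · (a' a⁻¹ b, d) = (a', d)` for `a ≤ a'`. Hence
`R(x) = {p | x.1 ≤ p.1}`, and symmetrically `L(x) = {p | x.2 ≤ p.2}`. So `z = (y.1, x.2)` lies in the
`ℒ`-class of `x` and the `ℛ`-class of `y`, and `x ↦ z ↦ y` by a left and then a right multiplication.
All witnesses stay in the positive cone when `x` and `y` do.
-/

section Coordinates

variable {S α : Type*} [Preorder α]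

/-- Coordinates from which the principal ideals of the magma `(S, m)` can be read off:
`R(x) = {p | fst x ≤ fst p}` and `L(x) = {p | snd x ≤ snd p}`. -/
structure LRCoordinates (m : S → S → S) (fst snd : S → α) : Prop where
  fst_le_fst_mul : ∀ x s, fst x ≤ fst (m x s)
  snd_le_snd_mul : ∀ s x, snd x ≤ snd (m s x)
  exists_mul_eq_of_fst_le : ∀ x p, fst x ≤ fst p → ∃ s, m x s = p
  exists_mul_eq_of_snd_le : ∀ x p, snd x ≤ snd p → ∃ s, m s x = p
  exists_fst_snd_eq : ∀ x y, ∃ z, fst z = fst x ∧ snd z = snd y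

namespace LRCoordinates

variable {m : S → S → S} {fst snd : S → α}

theorem mem_Rset_iff (h : LRCoordinates m fst snd) {x p : S} :
    p ∈ Rset m x ↔ fst x ≤ fst p := by
  refine ⟨?_, fun hp => Or.inr ?_⟩
  · rintro (rfl | ⟨s, rfl⟩)
    exacts [le_rfl, h.fst_le_fst_mul x s]
  · obtain ⟨s, hs⟩ := h.exists_mul_eq_of_fst_le x p hp
    exact ⟨s, hs.symm⟩

theorem mem_Lset_iff (h : LRCoordinates m fst snd) {x p : S} :
    p ∈ Lset m x ↔ snd x ≤ snd p := by
  refine ⟨?_, fun hp => Or.inr ?_⟩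
  · rintro (rfl | ⟨s, rfl⟩)
    exacts [le_rfl, h.snd_le_snd_mul s x]
  · obtain ⟨s, hs⟩ := h.exists_mul_eq_of_snd_le x p hp
    exact ⟨s, hs.symm⟩

theorem exists_mul_mul_eq (h : LRCoordinates m fst snd) (x y : S) :
    ∃ u v, m (m u x) v = y := by
  obtain ⟨z, hz₁, hz₂⟩ := h.exists_fst_snd_eq y x
  obtain ⟨u, rfl⟩ := h.exists_mul_eq_of_snd_le x z hz₂.ge
  obtain ⟨v, rfl⟩ := h.exists_mul_eq_of_fst_le _ y hz₁.le
  exact ⟨u, v, rfl⟩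

theorem exists_Lset_eq_and_Rset_eq (h : LRCoordinates m fst snd) (x y : S) :
    ∃ z, Lset m x = Lset m z ∧ Rset m z = Rset m y := by
  obtain ⟨z, hz₁, hz₂⟩ := h.exists_fst_snd_eq y x
  refine ⟨z, ?_, ?_⟩ <;> ext p
  · rw [h.mem_Lset_iff, h.mem_Lset_iff, hz₂]
  · rw [h.mem_Rset_iff, h.mem_Rset_iff, hz₁]

end LRCoordinates

end Coordinates

section SmulCoordinates

variable {G : Type*} [Group G] [LinearOrder G] [MulRightMono G]

theorem fst_le_fst_smul (x s : G × G) : x.1 ≤ (Smul x s).1 := by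
  unfold Smul
  split_ifs with hlt
  · exact le_mul_of_one_le_left' (le_mul_inv_iff_le.mpr hlt.le)
  all_goals exact le_rfl

theorem snd_le_snd_smul (s x : G × G) : x.2 ≤ (Smul s x).2 := by
  unfold Smul
  split_ifs with hlt
  · exact le_rfl
  · exact le_rfl
  · exact le_mul_of_one_le_left' (le_mul_inv_iff_le.mpr (not_lt.mp hlt))

theorem smul_mk_of_snd_le {x p : G × G} (hp : x.2 ≤ p.2) :
    Smul (p.1, p.2 * x.2⁻¹ * x.1) x = p := by
  have hx : x.1 ≤ p.2 * x.2⁻¹ * x.1 := le_mul_of_one_le_left' (le_mul_inv_iff_le.mpr hp)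
  unfold Smul
  rw [if_neg hx.not_gt]
  split_ifs with heq
  · exact Prod.ext rfl (mul_inv_eq_one.mp (by simpa using heq)).symm
  · simp

theorem smul_mk_of_fst_le {x p : G × G} (hp : x.1 ≤ p.1) :
    Smul x (p.1 * x.1⁻¹ * x.2, p.2) = p := by
  rcases hp.lt_or_eq with hlt | heq
  · have hx : x.2 < p.1 * x.1⁻¹ * x.2 := lt_mul_of_one_lt_left' _ (lt_mul_inv_iff_lt.mpr hlt)
    simp [Smul, hx]
  · simp [Smul, heq]

theorem lrCoordinates_smul : LRCoordinates (Smul (G := G)) Prod.fst Prod.snd where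
  fst_le_fst_mul := fst_le_fst_smul
  snd_le_snd_mul := snd_le_snd_smul
  exists_mul_eq_of_fst_le _ _ hp := ⟨_, smul_mk_of_fst_le hp⟩
  exists_mul_eq_of_snd_le _ _ hp := ⟨_, smul_mk_of_snd_le hp⟩
  exists_fst_snd_eq x y := ⟨(x.1, y.2), rfl, rfl⟩

end SmulCoordinates

theorem lrCoordinates_smulP :
    LRCoordinates (SmulP (G := G)) (fun x => x.1.1) (fun x => x.1.2) where
  fst_le_fst_mul x s := fst_le_fst_smul x.1 s.1
  snd_le_snd_mul s x := snd_le_snd_smul s.1 x.1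
  exists_mul_eq_of_fst_le x p hp :=
    ⟨⟨(p.1.1 * x.1.1⁻¹ * x.1.2, p.1.2), one_le_mul (le_mul_inv_iff_le.mpr hp) x.2.2, p.2.2⟩,
      Subtype.ext (smul_mk_of_fst_le hp)⟩
  exists_mul_eq_of_snd_le x p hp :=
    ⟨⟨(p.1.1, p.1.2 * x.1.2⁻¹ * x.1.1), p.2.1, one_le_mul (le_mul_inv_iff_le.mpr hp) x.2.1⟩,
      Subtype.ext (smul_mk_of_snd_le hp)⟩
  exists_fst_snd_eq x y := ⟨⟨(x.1.1, y.1.2), x.2.1, y.2.2⟩, rfl, rfl⟩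

/-- `S_G` and `S_G⁺` are simple (`∀ x y, ∃ u v, u·x·v = y`) and bisimple
(any two elements are `𝓓`-equivalent). -/
theorem stmt4 {G : Type*} [Group G] [LinearOrder G]
    [CovariantClass G G (· * ·) (· ≤ ·)]
    [CovariantClass G G (Function.swap (· * ·)) (· ≤ ·)] :
    (∀ x y : G × G, ∃ u v : G × G, Smul (Smul u x) v = y) ∧
    (∀ x y : G × G, ∃ z : G × G,
      Lset (Smul (G := G)) x = Lset (Smul (G := G)) z ∧
      Rset (Smul (G := G)) z = Rset (Smul (G := G)) y) ∧
    (∀ x y : PosS G, ∃ u v : PosS G, SmulP (SmulP u x) v = y) ∧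
    (∀ x y : PosS G, ∃ z : PosS G,
      Lset (SmulP (G := G)) x = Lset (SmulP (G := G)) z ∧
      Rset (SmulP (G := G)) z = Rset (SmulP (G := G)) y) :=
  ⟨lrCoordinates_smul.exists_mul_mul_eq, lrCoordinates_smul.exists_Lset_eq_and_Rset_eq,
    lrCoordinates_smulP.exists_mul_mul_eq, lrCoordinates_smulP.exists_Lset_eq_and_Rset_eq⟩
end

section
/- Let G be a linearly ordered group and g, h ∈ G with g < h. Then the subsemigroup of S_G generated by the two elements (g,h) and (h,g) is isomorphic (as a semigroup) to the bicyclic semigroup, realized as ℕ × ℕ with multiplication (k,l)·(m,n) = (k + m − min(l,m), l + n − min(l,m)); under this isomorphism the idempotent (g,g) corresponds to (0,0) and is a two-sided identity element of this subsemigroup. -/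
variable {G : Type*} [Group G] [LinearOrder G]
  [CovariantClass G G (· * ·) (· ≤ ·)] [CovariantClass G G (Function.swap (· * ·)) (· ≤ ·)]

/-- The multiplication of the bicyclic semigroup on `ℕ × ℕ`:
`(k,l)·(m,n) = (k + m − min(l,m), l + n − min(l,m))`. -/
def Bmul (x y : ℕ × ℕ) : ℕ × ℕ :=
  (x.1 + y.1 - min x.2 y.1, x.2 + y.2 - min x.2 y.1)

/-- The subsemigroup of `(S, m)` generated by the two elements `x` and `y`. -/
inductive Gen {S : Type*} (m : S → S → S) (x y : S) : S → Prop
  | fst : Gen m x y x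
  | snd : Gen m x y y
  | mul {a b : S} : Gen m x y a → Gen m x y b → Gen m x y (m a b)

/-!
Put `t = h * g⁻¹`, so `1 < t`. Since the order is right invariant, `n ↦ tⁿ * g` is strictly
increasing, hence comparing `tˡ * g` with `tᵐ * g` is comparing `l` with `m`, and
`tᵐ g (tˡ g)⁻¹ tᵏ g = t^(m - l + k) g` for `l ≤ m`. So `(k, l) ↦ (tᵏ * g, tˡ * g)` is an injective
homomorphism from the bicyclic semigroup to `S_G`. It sends the generators `(0, 1)` and `(1, 0)`
of the bicyclic semigroup to `(g, h)` and `(h, g)`, so its image is the subsemigroup these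
generate, and it sends the identity `(0, 0)` to `(g, g)`.
-/

theorem Gen.map_iff {S T : Type*} {m : S → S → S} {n : T → T → T} {f : T → S}
    (hf : ∀ a b, m (f a) (f b) = f (n a b)) {x y : T} {z : S} :
    Gen m (f x) (f y) z ↔ ∃ w, Gen n x y w ∧ f w = z := by
  constructor
  · intro hz
    induction hz with
    | fst => exact ⟨x, .fst, rfl⟩
    | snd => exact ⟨y, .snd, rfl⟩
    | mul _ _ iha ihb =>
      obtain ⟨a, ha, rfl⟩ := iha
      obtain ⟨b, hb, rfl⟩ := ihb
      exact ⟨n a b, .mul ha hb, (hf a b).symm⟩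
  · rintro ⟨w, hw, rfl⟩
    induction hw with
    | fst => exact .fst
    | snd => exact .snd
    | mul _ _ iha ihb => exact hf _ _ ▸ .mul iha ihb

theorem bmul_zero_left (p : ℕ × ℕ) : Bmul (0, 0) p = p := by
  simp [Bmul]

theorem bmul_zero_right (p : ℕ × ℕ) : Bmul p (0, 0) = p := by
  simp [Bmul]

theorem gen_bicyclic (p : ℕ × ℕ) : Gen Bmul (0, 1) (1, 0) p := by
  obtain ⟨k, l⟩ := p
  have hfst : ∀ k : ℕ, Gen Bmul (0, 1) (1, 0) (k, 0) := by
    intro k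
    induction k with
    | zero => exact .mul .fst .snd
    | succ k ih => simpa [Bmul, add_comm] using Gen.mul .snd ih
  have hsnd : ∀ l : ℕ, Gen Bmul (0, 1) (1, 0) (0, l) := by
    intro l
    induction l with
    | zero => exact hfst 0
    | succ l ih => simpa [Bmul] using Gen.mul ih .fst
  simpa [Bmul] using Gen.mul (hfst k) (hsnd l)

theorem pow_mul_mul_inv_mul_pow_mul {G : Type*} [Group G] (t g : G) {l m : ℕ} (hlm : l ≤ m)
    (k : ℕ) : t ^ m * g * (t ^ l * g)⁻¹ * (t ^ k * g) = t ^ (m - l + k) * g := by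
  rw [pow_add, pow_sub _ hlm]
  group

section OrderedGroup

variable {G : Type*} [Group G] [LinearOrder G] [MulRightMono G]

theorem strictMono_pow_mul {t : G} (ht : 1 < t) (g : G) : StrictMono fun n : ℕ ↦ t ^ n * g :=
  strictMono_nat_of_lt_succ fun n ↦ by
    simpa only [pow_succ', mul_assoc] using lt_mul_of_one_lt_left' (t ^ n * g) ht

def bicyclicMap (t g : G) (p : ℕ × ℕ) : G × G :=
  (t ^ p.1 * g, t ^ p.2 * g)

theorem bicyclicMap_injective {t : G} (ht : 1 < t) (g : G) :
    Function.Injective (bicyclicMap t g) := fun _ _ hpq ↦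
  Prod.ext ((strictMono_pow_mul ht g).injective (congrArg Prod.fst hpq))
    ((strictMono_pow_mul ht g).injective (congrArg Prod.snd hpq))

theorem smul_bicyclicMap {t : G} (ht : 1 < t) (g : G) (p q : ℕ × ℕ) :
    Smul (bicyclicMap t g p) (bicyclicMap t g q) = bicyclicMap t g (Bmul p q) := by
  obtain ⟨k, l⟩ := p
  obtain ⟨m, n⟩ := q
  have hmono := strictMono_pow_mul ht g
  simp only [Smul, bicyclicMap, Bmul, hmono.lt_iff_lt, hmono.injective.eq_iff]
  rcases lt_trichotomy l m with hlm | rfl | hml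
  · rw [if_pos hlm, pow_mul_mul_inv_mul_pow_mul t g hlm.le]
    congr 3 <;> omega
  · simp
  · rw [if_neg hml.not_gt, if_neg hml.ne', pow_mul_mul_inv_mul_pow_mul t g hml.le]
    congr 3 <;> omega

theorem gen_smul_iff {g h : G} (hgh : g < h) {z : G × G} :
    Gen Smul (g, h) (h, g) z ↔ ∃ p, bicyclicMap (h * g⁻¹) g p = z := by
  have ht : 1 < h * g⁻¹ := lt_mul_inv_iff_lt.2 hgh
  have hgens : ((g, h) : G × G) = bicyclicMap (h * g⁻¹) g (0, 1) ∧
      ((h, g) : G × G) = bicyclicMap (h * g⁻¹) g (1, 0) := by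
    simp [bicyclicMap]
  rw [hgens.1, hgens.2, Gen.map_iff (smul_bicyclicMap ht g)]
  simp only [gen_bicyclic, true_and]

noncomputable def bicyclicEquivGen {g h : G} (hgh : g < h) :
    ℕ × ℕ ≃ {z : G × G // Gen Smul (g, h) (h, g) z} :=
  Equiv.ofBijective (fun p ↦ ⟨bicyclicMap (h * g⁻¹) g p, (gen_smul_iff hgh).2 ⟨p, rfl⟩⟩)
    ⟨fun _ _ hpq ↦ bicyclicMap_injective (lt_mul_inv_iff_lt.2 hgh) g
        (congrArg Subtype.val hpq),
      fun z ↦ ((gen_smul_iff hgh).1 z.2).imp fun _ hp ↦ Subtype.ext hp⟩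

end OrderedGroup

theorem stmt5_general {G : Type*} [Group G] [LinearOrder G]
    [CovariantClass G G (Function.swap (· * ·)) (· ≤ ·)] (g h : G) (hgh : g < h) :
    Gen (Smul (G := G)) (g, h) (h, g) (g, g) ∧
    ∃ e : {z : G × G // Gen (Smul (G := G)) (g, h) (h, g) z} ≃ ℕ × ℕ,
      (∀ a b : {z : G × G // Gen (Smul (G := G)) (g, h) (h, g) z},
        e ⟨Smul a.1 b.1, Gen.mul a.2 b.2⟩ = Bmul (e a) (e b)) ∧
      (∀ hm : Gen (Smul (G := G)) (g, h) (h, g) (g, g), e ⟨(g, g), hm⟩ = (0, 0)) ∧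
      (∀ z : {z : G × G // Gen (Smul (G := G)) (g, h) (h, g) z},
        Smul (g, g) z.1 = z.1 ∧ Smul z.1 (g, g) = z.1) := by
  have ht : 1 < h * g⁻¹ := lt_mul_inv_iff_lt.2 hgh
  set E := bicyclicEquivGen hgh
  have hE : ∀ p, (E p).1 = bicyclicMap (h * g⁻¹) g p := fun _ ↦ rfl
  have hgg : bicyclicMap (h * g⁻¹) g (0, 0) = (g, g) := by simp [bicyclicMap]
  refine ⟨(gen_smul_iff hgh).2 ⟨_, hgg⟩, E.symm, fun a b ↦ ?_, fun _ ↦ ?_, fun z ↦ ?_⟩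
  · rw [E.symm_apply_eq]
    ext1
    rw [hE, ← smul_bicyclicMap ht, ← hE, ← hE, E.apply_symm_apply, E.apply_symm_apply]
  · exact E.symm_apply_eq.2 (Subtype.ext hgg.symm)
  · obtain ⟨p, hp⟩ := (gen_smul_iff hgh).1 z.2
    rw [← hp, ← hgg, smul_bicyclicMap ht, smul_bicyclicMap ht, bmul_zero_left, bmul_zero_right]
    exact ⟨rfl, rfl⟩

/-- For `g < h` in `G`, the subsemigroup of `S_G` generated by `(g,h)` and `(h,g)` is
isomorphic to the bicyclic semigroup; under this isomorphism the idempotent `(g,g)`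
corresponds to `(0,0)`, and `(g,g)` is a two-sided identity of this subsemigroup. -/
theorem stmt5 {G : Type*} [Group G] [LinearOrder G]
    [CovariantClass G G (· * ·) (· ≤ ·)]
    [CovariantClass G G (Function.swap (· * ·)) (· ≤ ·)] (g h : G) (hgh : g < h) :
    Gen (Smul (G := G)) (g, h) (h, g) (g, g) ∧
    ∃ e : {z : G × G // Gen (Smul (G := G)) (g, h) (h, g) z} ≃ ℕ × ℕ,
      (∀ a b : {z : G × G // Gen (Smul (G := G)) (g, h) (h, g) z},
        e ⟨Smul a.1 b.1, Gen.mul a.2 b.2⟩ = Bmul (e a) (e b)) ∧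
      (∀ hm : Gen (Smul (G := G)) (g, h) (h, g) (g, g), e ⟨(g, g), hm⟩ = (0, 0)) ∧
      (∀ z : {z : G × G // Gen (Smul (G := G)) (g, h) (h, g) z},
        Smul (g, g) z.1 = z.1 ∧ Smul z.1 (g, g) = z.1) :=
  stmt5_general g h hgh
end

section
/- Let G be an archimedean linearly ordered group. Then every non-trivial congruence on the semigroup S_G⁺ is a group congruence. -/
variable {G : Type*} [Group G] [LinearOrder G]
  [CovariantClass G G (· * ·) (· ≤ ·)] [CovariantClass G G (Function.swap (· * ·)) (· ≤ ·)]

/-- `c` is a congruence on the semigroup `(S, m)` : an equivalence relation compatible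
with multiplication on both sides. -/
def IsSgCongruence {S : Type*} (m : S → S → S) (c : S → S → Prop) : Prop :=
  Equivalence c ∧ ∀ x y s : S, c x y → c (m s x) (m s y) ∧ c (m x s) (m y s)

/-- `c` differs from both the identity relation and the universal relation. -/
def IsNontrivialRel {S : Type*} (c : S → S → Prop) : Prop :=
  (∃ x y : S, c x y ∧ x ≠ y) ∧ ∃ x y : S, ¬c x y

/-- The quotient of the semigroup `(S, m)` by the congruence `c` is a group:
there is a class acting as a two-sided identity and every class has a two-sided inverse. -/
def IsGroupCongruence {S : Type*} (m : S → S → S) (c : S → S → Prop) : Prop :=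
  ∃ e : S, (∀ x : S, c (m e x) x ∧ c (m x e) x) ∧ ∀ x : S, ∃ y : S, c (m x y) e ∧ c (m y x) e

/-- A linearly ordered group is archimedean if for all `1 < a` and `1 < b` there are
positive integers `m`, `n` with `b ≤ a ^ m` and `a ≤ b ^ n`. -/
def IsArchGroup (G : Type*) [Group G] [LinearOrder G] : Prop :=
  ∀ a b : G, 1 < a → 1 < b →
    (∃ m : ℕ, 0 < m ∧ b ≤ a ^ m) ∧ ∃ n : ℕ, 0 < n ∧ a ≤ b ^ n


/-!
The diagonal elements `(s, s)` of `S_G⁺` are its idempotents, `(1, 1)` is its identity and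
`(a, b)·(b, a) = (a, a)`, so a congruence is a group congruence as soon as it relates `(1, 1)` to
every diagonal element. Two-sided multiplication `(a, u)·(s, s)·(u, a) = (s u⁻¹ a, s u⁻¹ a)`
translates diagonal elements. A non-trivial congruence relates `(1, 1)` to some other element `w`;
multiplying by the transpose of `w` relates two diagonal elements, and translating them down
relates `(1, 1)` to some `(t, t)` with `t > 1`. Translating up by powers of `t` relates `(1, 1)` to
every `(tⁿ, tⁿ)`, and multiplying by the idempotent `(s, s)` passes this down to every `s ≤ tⁿ`,
which by the archimedean property is every `s`.
-/

theorem IsSgCongruence.mul_left {S : Type*} {m : S → S → S} {c : S → S → Prop}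
    (hc : IsSgCongruence m c) (s : S) {x y : S} (h : c x y) : c (m s x) (m s y) :=
  (hc.2 x y s h).1

theorem IsSgCongruence.mul_right {S : Type*} {m : S → S → S} {c : S → S → Prop}
    (hc : IsSgCongruence m c) (s : S) {x y : S} (h : c x y) : c (m x s) (m y s) :=
  (hc.2 x y s h).2

lemma smul_of_le {α : Type*} [Group α] [LinearOrder α] {a b c d : α} (h : b ≤ c) :
    Smul (a, b) (c, d) = (c * b⁻¹ * a, d) := by
  rcases h.lt_or_eq with h | rfl
  · simp [Smul, h]
  · simp [Smul]

lemma smul_of_ge {α : Type*} [Group α] [LinearOrder α] {a b c d : α} (h : c ≤ b) :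
    Smul (a, b) (c, d) = (a, b * c⁻¹ * d) := by
  rcases h.lt_or_eq with h | rfl
  · simp [Smul, h.not_gt, h.ne']
  · simp [Smul]

lemma smul_smul_diag {α : Type*} [Group α] [LinearOrder α] {a u s : α} (h : u ≤ s) :
    Smul (Smul (a, u) (s, s)) (u, a) = (s * u⁻¹ * a, s * u⁻¹ * a) := by
  rw [smul_of_le h, smul_of_ge h]

lemma eq_of_smul_smul_eq_one {a b a' b' : G} (ha : a ≤ a')
    (h : Smul (Smul (1, a) (a', b')) (b, 1) = (1, 1)) : a' = a ∧ b' = b := by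
  rw [smul_of_le ha, mul_one] at h
  rcases le_total b' b with hb | hb
  · rw [smul_of_le hb, Prod.mk.injEq] at h
    obtain ⟨hb1, ha1⟩ :=
      (mul_eq_one_iff_of_one_le (le_mul_inv_iff_le.2 hb) (le_mul_inv_iff_le.2 ha)).1 h.1
    exact ⟨mul_inv_eq_one.1 ha1, (mul_inv_eq_one.1 hb1).symm⟩
  · rw [smul_of_ge hb, Prod.mk.injEq, mul_one] at h
    exact ⟨mul_inv_eq_one.1 h.1, mul_inv_eq_one.1 h.2⟩

namespace PosS

def diag (s : G) (hs : 1 ≤ s) : PosS G := ⟨(s, s), hs, hs⟩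

def one : PosS G := diag 1 le_rfl

def swap (x : PosS G) : PosS G := ⟨(x.1.2, x.1.1), x.2.2, x.2.1⟩

end PosS

open PosS

lemma one_smulP : ∀ x : PosS G, SmulP one x = x
  | ⟨(a, b), ha, _⟩ => Subtype.ext <| by
    show Smul (1, 1) (a, b) = (a, b)
    rw [smul_of_le ha, inv_one, mul_one, mul_one]

lemma smulP_one : ∀ x : PosS G, SmulP x one = x
  | ⟨(a, b), _, hb⟩ => Subtype.ext <| by
    show Smul (a, b) (1, 1) = (a, b)
    rw [smul_of_ge hb, inv_one, mul_one, mul_one]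

lemma smulP_swap_self : ∀ x : PosS G, SmulP x x.swap = diag x.1.1 x.2.1
  | ⟨(a, b), _, _⟩ => Subtype.ext <| by
    show Smul (a, b) (b, a) = (a, a)
    rw [smul_of_le le_rfl, mul_inv_cancel, one_mul]

lemma swap_smulP_self : ∀ x : PosS G, SmulP x.swap x = diag x.1.2 x.2.2
  | ⟨(a, b), _, _⟩ => Subtype.ext <| by
    show Smul (b, a) (a, b) = (b, b)
    rw [smul_of_le le_rfl, mul_inv_cancel, one_mul]

lemma diag_smulP_diag {s t : G} (hs : 1 ≤ s) (ht : 1 ≤ t) (hst : s ≤ t) :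
    SmulP (diag s hs) (diag t ht) = diag t ht := Subtype.ext <| by
  show Smul (s, s) (t, t) = (t, t)
  rw [smul_of_le hst, inv_mul_cancel_right]

def DiagRel (c : PosS G → PosS G → Prop) (s t : G) : Prop :=
  ∃ (hs : 1 ≤ s) (ht : 1 ≤ t), c (diag s hs) (diag t ht)

namespace IsSgCongruence

variable {c : PosS G → PosS G → Prop}

lemma diagRel_symm (hcon : IsSgCongruence SmulP c) {s t : G} :
    DiagRel c s t → DiagRel c t s
  | ⟨hs, ht, h⟩ => ⟨ht, hs, hcon.1.symm h⟩

lemma diagRel_trans (hcon : IsSgCongruence SmulP c) {r s t : G} :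
    DiagRel c r s → DiagRel c s t → DiagRel c r t
  | ⟨hr, _, h⟩, ⟨_, ht, h'⟩ => ⟨hr, ht, hcon.1.trans h h'⟩

lemma diagRel_translate (hcon : IsSgCongruence SmulP c) {s t u a : G} (h : DiagRel c s t)
    (hu : 1 ≤ u) (hus : u ≤ s) (hut : u ≤ t) (ha : 1 ≤ a) :
    DiagRel c (s * u⁻¹ * a) (t * u⁻¹ * a) := by
  obtain ⟨hs, ht, h⟩ := h
  let L : PosS G := ⟨(a, u), ha, hu⟩
  let R : PosS G := ⟨(u, a), hu, ha⟩
  have hrel := hcon.mul_right R (hcon.mul_left L h)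
  refine ⟨one_le_mul (le_mul_inv_iff_le.2 hus) ha, one_le_mul (le_mul_inv_iff_le.2 hut) ha, ?_⟩
  convert hrel using 1 <;> exact Subtype.ext (smul_smul_diag ‹_›).symm

lemma diagRel_one_mul_inv (hcon : IsSgCongruence SmulP c) {s t : G} (h : DiagRel c s t)
    (hst : s ≤ t) : DiagRel c 1 (t * s⁻¹) := by
  simpa using hcon.diagRel_translate h h.1 le_rfl hst le_rfl

lemma diagRel_one_pow (hcon : IsSgCongruence SmulP c) {t : G} (h : DiagRel c 1 t) :
    ∀ n : ℕ, DiagRel c 1 (t ^ n)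
  | 0 => by rw [pow_zero]; exact ⟨le_rfl, le_rfl, hcon.1.refl _⟩
  | n + 1 => by
    have hn := hcon.diagRel_one_pow h n
    have hstep := hcon.diagRel_translate h le_rfl le_rfl h.2.1 hn.2.1
    simp only [inv_one, mul_one, one_mul, ← pow_succ'] at hstep
    exact hcon.diagRel_trans hn hstep

lemma diagRel_one_of_le (hcon : IsSgCongruence SmulP c) {s t : G} (h : DiagRel c 1 t)
    (hs : 1 ≤ s) (hst : s ≤ t) : DiagRel c 1 s := by
  obtain ⟨_, ht, h⟩ := h
  have hrel : c (SmulP (diag s hs) one) (SmulP (diag s hs) (diag t ht)) := hcon.mul_left _ h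
  rw [smulP_one, diag_smulP_diag hs ht hst] at hrel
  exact ⟨le_rfl, hs, hcon.1.trans h (hcon.1.symm hrel)⟩

lemma exists_rel_one_ne_of_le (hcon : IsSgCongruence SmulP c) {x y : PosS G} (hxy : c x y)
    (hne : x ≠ y) (hle : x.1.1 ≤ y.1.1) : ∃ w, c one w ∧ w ≠ one := by
  obtain ⟨⟨a, b⟩, ha, hb⟩ := x
  let L : PosS G := ⟨(1, a), le_rfl, ha⟩
  let R : PosS G := ⟨(b, 1), hb, le_rfl⟩
  have hx : SmulP (SmulP L ⟨(a, b), ha, hb⟩) R = one :=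
    Subtype.ext (show Smul (Smul (1, a) (a, b)) (b, 1) = (1, 1) by simp [Smul])
  refine ⟨SmulP (SmulP L y) R, hx ▸ hcon.mul_right R (hcon.mul_left L hxy), fun hy => hne ?_⟩
  obtain ⟨ha', hb'⟩ := eq_of_smul_smul_eq_one hle (congrArg Subtype.val hy)
  exact Subtype.ext (Prod.ext ha'.symm hb'.symm)

lemma exists_rel_one_ne (hcon : IsSgCongruence SmulP c) {x y : PosS G} (hxy : c x y)
    (hne : x ≠ y) : ∃ w, c one w ∧ w ≠ one := by
  rcases le_total x.1.1 y.1.1 with hle | hle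
  · exact hcon.exists_rel_one_ne_of_le hxy hne hle
  · exact hcon.exists_rel_one_ne_of_le (hcon.1.symm hxy) hne.symm hle

lemma exists_one_lt_diagRel (hcon : IsSgCongruence SmulP c) {w : PosS G} (h : c one w)
    (hw : w ≠ one) : ∃ t, 1 < t ∧ DiagRel c 1 t := by
  have hu := hcon.mul_right w.swap h
  have hv := hcon.mul_left w.swap h
  rw [one_smulP, smulP_swap_self] at hu
  rw [smulP_one, swap_smulP_self] at hv
  have huv : DiagRel c w.1.1 w.1.2 := ⟨w.2.1, w.2.2, hcon.1.trans (hcon.1.symm hu) hv⟩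
  obtain ⟨⟨u, v⟩, hu1, hv1⟩ := w
  rcases lt_trichotomy u v with hlt | rfl | hgt
  · exact ⟨v * u⁻¹, lt_mul_inv_iff_lt.2 hlt, hcon.diagRel_one_mul_inv huv hlt.le⟩
  · refine ⟨u, hu1.lt_of_ne fun h1 => hw ?_, le_rfl, hu1, h⟩
    exact Subtype.ext (Prod.ext h1.symm h1.symm)
  · exact ⟨u * v⁻¹, lt_mul_inv_iff_lt.2 hgt,
      hcon.diagRel_one_mul_inv (hcon.diagRel_symm huv) hgt.le⟩

lemma isGroupCongruence (hcon : IsSgCongruence SmulP c) (h : ∀ s, 1 ≤ s → DiagRel c 1 s) :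
    IsGroupCongruence SmulP c := by
  refine ⟨one, fun x => ⟨?_, ?_⟩, fun x => ⟨x.swap, ?_, ?_⟩⟩
  · rw [one_smulP]; exact hcon.1.refl x
  · rw [smulP_one]; exact hcon.1.refl x
  · obtain ⟨_, _, hx⟩ := h _ x.2.1
    rw [smulP_swap_self]; exact hcon.1.symm hx
  · obtain ⟨_, _, hx⟩ := h _ x.2.2
    rw [swap_smulP_self]; exact hcon.1.symm hx

end IsSgCongruence

/-- If `G` is an archimedean linearly ordered group, then every non-trivial congruence
on the semigroup `S_G⁺` is a group congruence. -/
theorem stmt7 {G : Type*} [Group G] [LinearOrder G]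
    [CovariantClass G G (· * ·) (· ≤ ·)]
    [CovariantClass G G (Function.swap (· * ·)) (· ≤ ·)]
    (harch : IsArchGroup G)
    (c : PosS G → PosS G → Prop)
    (hcon : IsSgCongruence (SmulP (G := G)) c) (hnt : IsNontrivialRel c) :
    IsGroupCongruence (SmulP (G := G)) c := by
  obtain ⟨⟨x, y, hxy, hne⟩, -⟩ := hnt
  obtain ⟨w, hw, hw1⟩ := hcon.exists_rel_one_ne hxy hne
  obtain ⟨t, ht, htrel⟩ := hcon.exists_one_lt_diagRel hw hw1
  refine hcon.isGroupCongruence fun s hs => ?_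
  rcases hs.lt_or_eq with hs1 | rfl
  · obtain ⟨⟨m, -, hsm⟩, -⟩ := harch t s ht hs1
    exact hcon.diagRel_one_of_le (hcon.diagRel_one_pow htrel m) hs hsm
  · exact hcon.diagRel_one_of_le htrel le_rfl ht.le
end

section
/- Let G be an archimedean linearly ordered group. Then every non-trivial congruence on the semigroup S_G is a group congruence. -/
variable {G : Type*} [Group G] [LinearOrder G]
  [CovariantClass G G (· * ·) (· ≤ ·)] [CovariantClass G G (Function.swap (· * ·)) (· ≤ ·)]

/-!
Two distinct congruent elements can be multiplied down to two distinct congruent idempotents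
`(x, x) ~ (y, y)` with `x < y`. Conjugating this by `(t, x)` and `(x, t)` gives
`(t, t) ~ (s t, s t)` for every `t`, where `s = y x⁻¹ > 1`, hence `(t, t) ~ (sⁿ t, sⁿ t)`.
Since `(g, g) · (h, h) = (max g h, max g h)`, the congruence classes of idempotents are convex, so
by the archimedean property every idempotent is congruent to every other one. Modulo such a
congruence `(1, 1)` is an identity and `(b, a)` is an inverse of `(a, b)`.
-/

namespace IsSgCongruence

variable {S : Type*} {m : S → S → S} {c : S → S → Prop}

theorem mul_left_s8 (hc : IsSgCongruence m c) (s : S) {x y : S} (h : c x y) : c (m s x) (m s y) :=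
  (hc.2 x y s h).1

theorem mul_right_s8 (hc : IsSgCongruence m c) (s : S) {x y : S} (h : c x y) : c (m x s) (m y s) :=
  (hc.2 x y s h).2

end IsSgCongruence

section SG

variable {α : Type*} [Group α] [LinearOrder α]

theorem IsArchGroup.exists_le_pow (harch : IsArchGroup α) {s : α} (hs : 1 < s) (g : α) :
    ∃ n : ℕ, g ≤ s ^ n := by
  rcases le_or_gt g 1 with hg | hg
  · exact ⟨0, by rwa [pow_zero]⟩
  · obtain ⟨⟨n, -, hn⟩, -⟩ := harch s g hs hg
    exact ⟨n, hn⟩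

theorem Smul_of_lt {a b c d : α} (h : b < c) : Smul (a, b) (c, d) = (c * b⁻¹ * a, d) := by
  simp [Smul, h]

theorem Smul_self_mid (a b d : α) : Smul (a, b) (b, d) = (a, d) := by
  simp [Smul]

theorem Smul_of_gt {a b c d : α} (h : c < b) : Smul (a, b) (c, d) = (a, b * c⁻¹ * d) := by
  simp [Smul, h.not_gt, h.ne']

theorem Smul_idem_of_le {a u w : α} (h : u ≤ w) : Smul (a, u) (w, w) = (w * u⁻¹ * a, w) := by
  rcases h.lt_or_eq with h | rfl
  · exact Smul_of_lt h
  · simp [Smul]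

theorem Smul_idem_of_ge {a u w : α} (h : w ≤ u) : Smul (a, u) (w, w) = (a, u) := by
  rcases h.lt_or_eq with h | rfl
  · simp [Smul_of_gt h]
  · simp [Smul]

variable {c : α × α → α × α → Prop}

theorem idem_shift (hc : IsSgCongruence Smul c) {x y : α} (hlt : x < y) (hxy : c (x, x) (y, y))
    (t : α) : c (t, t) (y * x⁻¹ * t, y * x⁻¹ * t) := by
  simpa only [Smul_self_mid, Smul_idem_of_le hlt.le, Smul_of_gt hlt]
    using hc.mul_right_s8 (x, t) (hc.mul_left_s8 (t, x) hxy)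

theorem idem_pow_shift (hc : IsSgCongruence Smul c) {x y : α} (hlt : x < y)
    (hxy : c (x, x) (y, y)) (n : ℕ) (t : α) :
    c (t, t) ((y * x⁻¹) ^ n * t, (y * x⁻¹) ^ n * t) := by
  induction n with
  | zero => simpa only [pow_zero, one_mul] using hc.1.refl (t, t)
  | succ n ih =>
    rw [pow_succ', mul_assoc]
    exact hc.1.trans ih (idem_shift hc hlt hxy _)

theorem idem_of_le_of_le (hc : IsSgCongruence Smul c) {x y w : α} (hxy : c (x, x) (y, y))
    (hxw : x ≤ w) (hwy : w ≤ y) : c (w, w) (y, y) := by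
  simpa only [Smul_idem_of_le hxw, Smul_idem_of_ge hwy, inv_mul_cancel_right]
    using hc.mul_right_s8 (w, w) hxy

theorem isGroupCongruence_of_idem (hc : IsSgCongruence Smul c)
    (hidem : ∀ g h : α, c (g, g) (h, h)) : IsGroupCongruence Smul c := by
  refine ⟨(1, 1), fun ⟨a, b⟩ => ⟨?_, ?_⟩, fun ⟨a, b⟩ => ⟨(b, a), ?_, ?_⟩⟩
  · simpa only [Smul_self_mid] using hc.mul_right_s8 (a, b) (hidem 1 a)
  · simpa only [Smul_self_mid] using hc.1.symm (hc.mul_left_s8 (a, b) (hidem b 1))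
  · rw [Smul_self_mid]
    exact hidem a 1
  · rw [Smul_self_mid]
    exact hidem b 1

variable [MulRightMono α]

theorem one_lt_mul_inv_of_lt {x y : α} (h : x < y) : 1 < y * x⁻¹ :=
  lt_mul_inv_iff_mul_lt.mpr (by rwa [one_mul])

theorem lt_mul_inv_mul_of_lt {x y : α} (h : x < y) (t : α) : t < y * x⁻¹ * t :=
  lt_mul_of_one_lt_left' t (one_lt_mul_inv_of_lt h)

theorem exists_idem_lt_of_fst_lt (hc : IsSgCongruence Smul c) {a a' u : α} (ha : a < a')
    (h : c (a, u) (a', u)) : ∃ p q : α, p < q ∧ c (p, p) (q, q) := by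
  have huw : u < a' * a⁻¹ * u := lt_mul_inv_mul_of_lt ha u
  have h₁ : c (u, a' * a⁻¹ * u) (u, u) := by
    simpa only [Smul_of_gt ha, Smul_self_mid] using hc.mul_left_s8 (u, a') h
  have h₂ : c (u, a' * a⁻¹ * u) (a' * a⁻¹ * u, a' * a⁻¹ * u) := by
    simpa only [Smul_self_mid, Smul_of_lt huw, inv_mul_cancel_right]
      using hc.mul_right_s8 (a' * a⁻¹ * u, a' * a⁻¹ * u) h₁
  exact ⟨u, _, huw, hc.1.trans (hc.1.symm h₁) h₂⟩

theorem exists_idem_lt_of_snd_le (hc : IsSgCongruence Smul c) {a a' u u' : α} (hu : u ≤ u')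
    (h : c (a, u) (a', u')) (hne : (a, u) ≠ (a', u')) : ∃ p q : α, p < q ∧ c (p, p) (q, q) := by
  by_cases ha : a' = u' * u⁻¹ * a
  · have hu' : u < u' := hu.lt_of_ne (by rintro rfl; simp [ha] at hne)
    have h₁ := hc.mul_right_s8 (u, a) h
    rw [Smul_self_mid, Smul_of_gt hu', ← ha] at h₁
    exact ⟨a, a', ha ▸ lt_mul_inv_mul_of_lt hu' a, h₁⟩
  · have h₁ := hc.mul_right_s8 (u', u') h
    rw [Smul_idem_of_le hu, Smul_self_mid] at h₁
    rcases Ne.lt_or_gt ha with hlt | hlt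
    · exact exists_idem_lt_of_fst_lt hc hlt (hc.1.symm h₁)
    · exact exists_idem_lt_of_fst_lt hc hlt h₁

theorem exists_idem_lt_of_ne (hc : IsSgCongruence Smul c) {x y : α × α} (h : c x y)
    (hne : x ≠ y) : ∃ p q : α, p < q ∧ c (p, p) (q, q) := by
  obtain ⟨a, u⟩ := x
  obtain ⟨a', u'⟩ := y
  rcases le_total u u' with hu | hu
  · exact exists_idem_lt_of_snd_le hc hu h hne
  · exact exists_idem_lt_of_snd_le hc hu (hc.1.symm h) hne.symm

theorem idem_congr_all (harch : IsArchGroup α) (hc : IsSgCongruence Smul c) {x y : α}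
    (hlt : x < y) (hxy : c (x, x) (y, y)) (g h : α) : c (g, g) (h, h) := by
  suffices key : ∀ g h : α, g ≤ h → c (g, g) (h, h) by
    rcases le_total g h with hgh | hhg
    · exact key g h hgh
    · exact hc.1.symm (key h g hhg)
  intro g h hgh
  obtain ⟨n, hn⟩ := harch.exists_le_pow (one_lt_mul_inv_of_lt hlt) (h * g⁻¹)
  have hchain := idem_pow_shift hc hlt hxy n g
  exact hc.1.trans hchain
    (hc.1.symm (idem_of_le_of_le hc hchain hgh (mul_inv_le_iff_le_mul.mp hn)))

end SG

theorem stmt8_general {G : Type*} [Group G] [LinearOrder G]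
    [CovariantClass G G (Function.swap (· * ·)) (· ≤ ·)]
    (harch : IsArchGroup G)
    (c : (G × G) → (G × G) → Prop)
    (hcon : IsSgCongruence (Smul (G := G)) c) (hnt : IsNontrivialRel c) :
    IsGroupCongruence (Smul (G := G)) c := by
  obtain ⟨x, y, hxy, hne⟩ := hnt.1
  obtain ⟨p, q, hpq, hidem⟩ := exists_idem_lt_of_ne hcon hxy hne
  exact isGroupCongruence_of_idem hcon (idem_congr_all harch hcon hpq hidem)

/-- If `G` is an archimedean linearly ordered group, then every non-trivial congruence
on the semigroup `S_G` is a group congruence. -/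
theorem stmt8 {G : Type*} [Group G] [LinearOrder G]
    [CovariantClass G G (· * ·) (· ≤ ·)]
    [CovariantClass G G (Function.swap (· * ·)) (· ≤ ·)]
    (harch : IsArchGroup G)
    (c : (G × G) → (G × G) → Prop)
    (hcon : IsSgCongruence (Smul (G := G)) c) (hnt : IsNontrivialRel c) :
    IsGroupCongruence (Smul (G := G)) c :=
  stmt8_general harch c hcon hnt
end

section
/- Let A and H be linearly ordered groups, each containing more than one element, and let G = A ×ₗ H be their lexicographic product (componentwise multiplication, lexicographic order), which is again a linearly ordered group. Then the relation on S_G defined by ((a₁,b₁),(c₁,d₁)) ∼ ((a₂,b₂),(c₂,d₂)) if and only if a₁ = a₂, c₁ = c₂ and d₁⁻¹·b₁ = d₂⁻¹·b₂ is a non-trivial congruence on S_G that is not a group congruence; the analogously defined relation on S_G⁺ is a non-trivial non-group congruence on S_G⁺. In particular S_G and S_G⁺ possess non-trivial non-group congruences. -/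
/-!
Writing `M = max x.2 y.1`, the product of `S_G` is `x·y = (M·x.2⁻¹·x.1, M·y.1⁻¹·y.2)`. Since the
first projection of `A ×ₗ H` is monotone it commutes with `max`, so `x ↦ ((a, c), d⁻¹·b)` is a
homomorphism from `S_{A ×ₗ H}` onto `S_A × Hᵐᵒᵖ`, and `∼` is its kernel. A group quotient of `S_G`
through `∼` would make `S_A` (resp. `S_A⁺`) a group, but first coordinates never decrease under
right multiplication, `x.1 ≤ (x·y).1`: an identity of `S_A` would need the least first coordinate,
which `A` lacks, and in `S_A⁺` an element with first coordinate `> 1` has no inverse.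
-/

variable {G : Type*} [Group G] [LinearOrder G]
  [CovariantClass G G (· * ·) (· ≤ ·)] [CovariantClass G G (Function.swap (· * ·)) (· ≤ ·)]

section LexProduct

variable {A H : Type*} [Group A] [LinearOrder A]
  [CovariantClass A A (· * ·) (· ≤ ·)] [CovariantClass A A (Function.swap (· * ·)) (· ≤ ·)]
  [Group H] [LinearOrder H]
  [CovariantClass H H (· * ·) (· ≤ ·)] [CovariantClass H H (Function.swap (· * ·)) (· ≤ ·)]

/-- The lexicographic product of the groups `A` and `H`: componentwise multiplication on
`Lex (A × H)`, which carries the lexicographic linear order. -/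
instance : Group (Lex (A × H)) := inferInstanceAs (Group (A × H))

instance : CovariantClass (Lex (A × H)) (Lex (A × H)) (· * ·) (· ≤ ·) :=
  ⟨by
    rintro c a b hab
    rcases Prod.Lex.le_iff.mp hab with hlt | ⟨h1, h2⟩
    · exact Prod.Lex.le_iff.mpr (Or.inl (mul_lt_mul_right hlt _))
    · refine Prod.Lex.le_iff.mpr (Or.inr ⟨?_, mul_le_mul_right h2 _⟩)
      show (ofLex c).1 * (ofLex a).1 = (ofLex c).1 * (ofLex b).1
      rw [h1]⟩

instance : CovariantClass (Lex (A × H)) (Lex (A × H)) (Function.swap (· * ·)) (· ≤ ·) :=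
  ⟨by
    rintro c a b hab
    rcases Prod.Lex.le_iff.mp hab with hlt | ⟨h1, h2⟩
    · exact Prod.Lex.le_iff.mpr (Or.inl (mul_lt_mul_left hlt _))
    · refine Prod.Lex.le_iff.mpr (Or.inr ⟨?_, mul_le_mul_left h2 _⟩)
      show (ofLex a).1 * (ofLex c).1 = (ofLex b).1 * (ofLex c).1
      rw [h1]⟩

/-- The relation `((a₁,b₁),(c₁,d₁)) ∼ ((a₂,b₂),(c₂,d₂))` iff `a₁ = a₂`, `c₁ = c₂` and
`d₁⁻¹·b₁ = d₂⁻¹·b₂` on `S_G` for `G = A ×ₗ H`. -/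
def lexRel (x y : Lex (A × H) × Lex (A × H)) : Prop :=
  (ofLex x.1).1 = (ofLex y.1).1 ∧ (ofLex x.2).1 = (ofLex y.2).1 ∧
    (ofLex x.2).2⁻¹ * (ofLex x.1).2 = (ofLex y.2).2⁻¹ * (ofLex y.1).2

/-- The analogous relation on `S_G⁺` for `G = A ×ₗ H`. -/
def lexRelP (x y : PosS (Lex (A × H))) : Prop := lexRel x.1 y.1

theorem isSgCongruence_ker {S T : Type*} {m : S → S → S} {n : T → T → T} (f : S → T)
    (hf : ∀ x y, f (m x y) = n (f x) (f y)) : IsSgCongruence m (fun x y => f x = f y) :=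
  ⟨⟨fun _ => rfl, Eq.symm, Eq.trans⟩, fun x y s hxy => by simp only [hf, hxy, and_self]⟩

theorem IsGroupCongruence.map {S T : Type*} {m : S → S → S} {n : T → T → T}
    {c : S → S → Prop} (f : S → T) (hf : ∀ x y, f (m x y) = n (f x) (f y))
    (hf_surj : Function.Surjective f) (hc : ∀ x y, c x y → f x = f y)
    (h : IsGroupCongruence m c) : IsGroupCongruence n (· = ·) := by
  obtain ⟨e, he, hinv⟩ := h
  refine ⟨f e, fun x' => ?_, fun x' => ?_⟩
  · obtain ⟨x, rfl⟩ := hf_surj x'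
    rw [← hf, ← hf]
    exact ⟨hc _ _ (he x).1, hc _ _ (he x).2⟩
  · obtain ⟨x, rfl⟩ := hf_surj x'
    obtain ⟨y, hxy, hyx⟩ := hinv x
    exact ⟨f y, by rw [← hf]; exact hc _ _ hxy, by rw [← hf]; exact hc _ _ hyx⟩

theorem IsNontrivialRel.of_injective {S T : Type*} {c : T → T → Prop} (f : S → T)
    (hf : Function.Injective f) (h : IsNontrivialRel fun x y => c (f x) (f y)) :
    IsNontrivialRel c := by
  obtain ⟨⟨x, y, hxy, hne⟩, ⟨x', y', hxy'⟩⟩ := h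
  exact ⟨⟨f x, f y, hxy, hf.ne hne⟩, ⟨f x', f y', hxy'⟩⟩

theorem Smul_eq_max {G : Type*} [Group G] [LinearOrder G] (x y : G × G) :
    Smul x y = (max x.2 y.1 * x.2⁻¹ * x.1, max x.2 y.1 * y.1⁻¹ * y.2) := by
  unfold Smul
  split_ifs with hlt heq
  · simp [max_eq_right hlt.le]
  · simp [heq]
  · have hgt : y.1 < x.2 := lt_of_le_of_ne (not_lt.mp hlt) (Ne.symm heq)
    simp [max_eq_left hgt.le]

theorem le_Smul_fst {G : Type*} [Group G] [LinearOrder G] [MulRightMono G] (x y : G × G) :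
    x.1 ≤ (Smul x y).1 := by
  rw [Smul_eq_max]
  exact le_mul_of_one_le_left' (le_mul_inv_iff_le.mpr (le_max_left _ _))

theorem exists_one_lt_of_nontrivial {G : Type*} [Group G] [LinearOrder G] [MulLeftMono G]
    [Nontrivial G] : ∃ a : G, 1 < a := by
  obtain ⟨a, ha⟩ := exists_ne (1 : G)
  rcases ha.lt_or_gt with h | h
  · exact ⟨a⁻¹, Left.one_lt_inv_iff.mpr h⟩
  · exact ⟨a, h⟩

theorem not_isGroupCongruence_Smul_eq [Nontrivial G] :
    ¬ IsGroupCongruence (Smul (G := G)) (· = ·) := by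
  rintro ⟨e, he, -⟩
  obtain ⟨m, hm⟩ := exists_one_lt_of_nontrivial (G := G)
  have hle : e.1 ≤ e.1 * m⁻¹ := by
    simpa only [(he (e.1 * m⁻¹, 1)).1] using le_Smul_fst e (e.1 * m⁻¹, 1)
  exact (mul_lt_of_lt_one_right' e.1 (Left.inv_lt_one_iff.mpr hm)).not_ge hle

theorem not_isGroupCongruence_SmulP_eq [Nontrivial G] :
    ¬ IsGroupCongruence (SmulP (G := G)) (· = ·) := by
  rintro ⟨e, he, hinv⟩
  obtain ⟨m, hm⟩ := exists_one_lt_of_nontrivial (G := G)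
  let one : PosS G := ⟨(1, 1), le_rfl, le_rfl⟩
  let x : PosS G := ⟨(m, 1), hm.le, le_rfl⟩
  have he1 : e.1.1 ≤ 1 := by
    have h := le_Smul_fst e.1 one.1
    rwa [show (Smul e.1 one.1).1 = 1 from congrArg (fun p : PosS G => p.1.1) (he one).1] at h
  obtain ⟨y, hxy, -⟩ := hinv x
  have hm_le : m ≤ e.1.1 := by
    have h := le_Smul_fst x.1 y.1
    rwa [show (Smul x.1 y.1).1 = e.1.1 from congrArg (fun p : PosS G => p.1.1) hxy] at h
  exact (hm.trans_le (hm_le.trans he1)).false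

section

variable {A H : Type*}

def lexFst (x : Lex (A × H) × Lex (A × H)) : A × A := ((ofLex x.1).1, (ofLex x.2).1)

theorem ofLex_max_fst [LinearOrder A] [LinearOrder H] (u v : Lex (A × H)) :
    (ofLex (max u v)).1 = max (ofLex u).1 (ofLex v).1 :=
  Monotone.map_max (f := fun w : Lex (A × H) => (ofLex w).1) Prod.Lex.monotone_fst_ofLex

variable [Group H]

def lexQuot (x : Lex (A × H) × Lex (A × H)) : H := (ofLex x.2).2⁻¹ * (ofLex x.1).2

def lexHom (x : Lex (A × H) × Lex (A × H)) : (A × A) × H := (lexFst x, lexQuot x)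

theorem lexRel_eq_ker : lexRel (A := A) (H := H) = fun x y => lexHom x = lexHom y := by
  ext x y
  simp only [lexRel, lexHom, lexFst, lexQuot, Prod.ext_iff, and_assoc]

theorem lexFst_surjective : Function.Surjective (lexFst (A := A) (H := H)) :=
  fun p => ⟨(toLex (p.1, 1), toLex (p.2, 1)), rfl⟩

variable [Group A] [LinearOrder A] [LinearOrder H]

def SmulProdMulOp (p q : (A × A) × H) : (A × A) × H := (Smul p.1 q.1, q.2 * p.2)

theorem lexFst_Smul (x y : Lex (A × H) × Lex (A × H)) :
    lexFst (Smul x y) = Smul (lexFst x) (lexFst y) := by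
  simp only [lexFst, Smul_eq_max, ofLex_mul, ofLex_inv, Prod.fst_mul, Prod.fst_inv, ofLex_max_fst]

theorem lexQuot_Smul (x y : Lex (A × H) × Lex (A × H)) :
    lexQuot (Smul x y) = lexQuot y * lexQuot x := by
  simp only [lexQuot, Smul_eq_max, ofLex_mul, ofLex_inv, Prod.snd_mul, Prod.snd_inv]
  group

theorem lexHom_Smul (x y : Lex (A × H) × Lex (A × H)) :
    lexHom (Smul x y) = SmulProdMulOp (lexHom x) (lexHom y) :=
  Prod.ext (lexFst_Smul x y) (lexQuot_Smul x y)

theorem lexRel_isSgCongruence : IsSgCongruence (Smul (G := Lex (A × H))) lexRel := by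
  rw [lexRel_eq_ker]
  exact isSgCongruence_ker lexHom lexHom_Smul

theorem one_le_toLex {a : A} {h : H} (ha : 1 ≤ a) (hh : 1 ≤ h) :
    (1 : Lex (A × H)) ≤ toLex (a, h) :=
  Prod.Lex.toLex_mono ⟨ha, hh⟩

def lexFstP (x : PosS (Lex (A × H))) : PosS A :=
  ⟨lexFst x.1, Prod.Lex.monotone_fst_ofLex x.2.1, Prod.Lex.monotone_fst_ofLex x.2.2⟩

theorem lexFstP_surjective : Function.Surjective (lexFstP (A := A) (H := H)) :=
  fun p => ⟨⟨(toLex (p.1.1, 1), toLex (p.1.2, 1)), one_le_toLex p.2.1 le_rfl,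
    one_le_toLex p.2.2 le_rfl⟩, rfl⟩

variable [MulLeftMono A] [MulLeftMono H]

theorem lexRelP_nontrivial [Nontrivial A] [Nontrivial H] :
    IsNontrivialRel (lexRelP (A := A) (H := H)) := by
  obtain ⟨m, hm⟩ := exists_one_lt_of_nontrivial (G := A)
  obtain ⟨k, hk⟩ := exists_one_lt_of_nontrivial (G := H)
  let pt (a : A) (h : H) (ha : 1 ≤ a) (hh : 1 ≤ h) : PosS (Lex (A × H)) :=
    ⟨(toLex (a, h), toLex (1, h)), one_le_toLex ha hh, one_le_toLex le_rfl hh⟩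
  refine ⟨⟨pt 1 1 le_rfl le_rfl, pt 1 k le_rfl hk.le, ⟨rfl, rfl, by simp [pt]⟩, ?_⟩,
    ⟨pt 1 1 le_rfl le_rfl, pt m 1 hm.le le_rfl, fun h => hm.ne h.1⟩⟩
  intro h
  exact hk.ne (congrArg (fun p : PosS (Lex (A × H)) => (ofLex p.1.1).2) h)

variable [MulRightMono A] [MulRightMono H]

theorem lexRelP_isSgCongruence : IsSgCongruence (SmulP (G := Lex (A × H))) lexRelP := by
  show IsSgCongruence SmulP fun x y : PosS (Lex (A × H)) => lexRel x.1 y.1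
  rw [lexRel_eq_ker]
  exact isSgCongruence_ker (m := SmulP) (fun x : PosS (Lex (A × H)) => lexHom x.1)
    fun x y => lexHom_Smul x.1 y.1

theorem lexFstP_SmulP (x y : PosS (Lex (A × H))) :
    lexFstP (SmulP x y) = SmulP (lexFstP x) (lexFstP y) :=
  Subtype.ext (lexFst_Smul x.1 y.1)

end

/-- If `G = A ×ₗ H` is the lexicographic product of two non-singleton linearly ordered
groups, then `∼` is a non-trivial congruence on `S_G` that is not a group congruence,
and likewise on `S_G⁺`; in particular `S_G` and `S_G⁺` possess non-trivial non-group
congruences. -/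
theorem stmt9 [Nontrivial A] [Nontrivial H] :
    (IsSgCongruence (Smul (G := Lex (A × H))) lexRel ∧ IsNontrivialRel (lexRel (A := A) (H := H)) ∧
      ¬ IsGroupCongruence (Smul (G := Lex (A × H))) lexRel) ∧
    (IsSgCongruence (SmulP (G := Lex (A × H))) lexRelP ∧ IsNontrivialRel (lexRelP (A := A) (H := H)) ∧
      ¬ IsGroupCongruence (SmulP (G := Lex (A × H))) lexRelP) := by
  refine ⟨⟨lexRel_isSgCongruence,
      lexRelP_nontrivial.of_injective (c := lexRel) _ Subtype.val_injective, ?_⟩,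
    ⟨lexRelP_isSgCongruence, lexRelP_nontrivial, ?_⟩⟩
  · exact fun h => not_isGroupCongruence_Smul_eq
      (h.map lexFst lexFst_Smul lexFst_surjective fun _ _ hxy => Prod.ext hxy.1 hxy.2.1)
  · exact fun h => not_isGroupCongruence_SmulP_eq
      (h.map lexFstP lexFstP_SmulP lexFstP_surjective
        fun _ _ hxy => Subtype.ext (Prod.ext hxy.1 hxy.2.1))

end LexProduct
end

section
/- Let G be a commutative linearly ordered group. Then the following are equivalent: (i) G is archimedean; (ii) every non-trivial congruence on S_G is a group congruence; (iii) every non-trivial congruence on S_G⁺ is a group congruence. -/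
/-!
Think of `(a, b)` as the translation `x ↦ x·a⁻¹·b` from `[a, ∞)` onto `[b, ∞)`, so that `Smul` is
composition and the idempotents are the identities `(a, a)`; in a group quotient all idempotents
collapse to the identity.

If `G` is not archimedean, say `αⁿ < β` for all `n`, then congruence of both coordinates modulo the
convex subgroup generated by `α` is a non-trivial congruence separating the idempotents `(1, 1)` and
`(β, β)`. If `G` is archimedean, sandwiching a congruent pair `x ≠ y` between `(1, a)` and `(b, 1)`
gives `(1, 1) ~ (q, q)` with `q > 1`; translating by powers of `q` identifies all idempotents, and
then the quotient is a group with identity `[(1, 1)]` and `[(a, b)]⁻¹ = [(b, a)]`.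

Both arguments work in any subsemigroup `P × P` of `S_G` with `G⁺ ⊆ P`, which covers `S_G` and
`S_G⁺` at once.
-/

variable {G : Type*} [Group G] [LinearOrder G]
  [CovariantClass G G (· * ·) (· ≤ ·)] [CovariantClass G G (Function.swap (· * ·)) (· ≤ ·)]

namespace Smul

variable {G : Type*} [CommGroup G] [LinearOrder G]

theorem eq_sup (x y : G × G) :
    Smul x y = (x.1 * x.2⁻¹ * (x.2 ⊔ y.1), y.2 * y.1⁻¹ * (x.2 ⊔ y.1)) := by
  obtain ⟨a, b⟩ := x
  obtain ⟨c, d⟩ := y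
  rcases lt_trichotomy b c with h | rfl | h
  · simp only [Smul, h, if_true, sup_eq_right.2 h.le, inv_mul_cancel_right, Prod.mk.injEq,
      and_true]
    ac_rfl
  · simp [Smul]
  · simp only [Smul, not_lt.2 h.le, h.ne', if_false, sup_eq_left.2 h.le, inv_mul_cancel_right,
      Prod.mk.injEq, true_and]
    ac_rfl

theorem of_eq (a b c : G) : Smul (a, b) (b, c) = (a, c) := by
  simp [Smul]

theorem diag (s t : G) : Smul (s, s) (t, t) = (s ⊔ t, s ⊔ t) := by
  simp [eq_sup]

variable [IsOrderedMonoid G]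

theorem assoc (x y z : G × G) : Smul (Smul x y) z = Smul x (Smul y z) := by
  obtain ⟨x₁, x₂⟩ := x
  obtain ⟨y₁, y₂⟩ := y
  obtain ⟨z₁, z₂⟩ := z
  simp only [eq_sup]
  have hl : y₂ * y₁⁻¹ * (x₂ ⊔ y₁) ⊔ z₁ = y₂ * y₁⁻¹ * (x₂ ⊔ y₁ ⊔ y₁ * y₂⁻¹ * z₁) := by
    rw [mul_sup (x₂ ⊔ y₁) (y₁ * y₂⁻¹ * z₁) (y₂ * y₁⁻¹)]; congr 1; group
  have hr : x₂ ⊔ y₁ * y₂⁻¹ * (y₂ ⊔ z₁) = x₂ ⊔ y₁ ⊔ y₁ * y₂⁻¹ * z₁ := by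
    rw [mul_sup y₂ z₁ (y₁ * y₂⁻¹), inv_mul_cancel_right, sup_assoc]
  rw [hl, hr, Prod.mk.injEq]
  constructor <;> group

theorem fst_le (x y : G × G) : x.1 ≤ (Smul x y).1 := by
  rw [eq_sup, mul_assoc]
  refine le_mul_of_one_le_right' ?_
  rw [le_inv_mul_iff_mul_le, mul_one]
  exact le_sup_left

theorem snd_le (x y : G × G) : y.2 ≤ (Smul x y).2 := by
  rw [eq_sup]
  dsimp only
  rw [mul_assoc]
  refine le_mul_of_one_le_right' ?_
  rw [le_inv_mul_iff_mul_le, mul_one]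
  exact le_sup_right

theorem fst_eq_iff (x y : G × G) : (Smul x y).1 = x.1 ↔ y.1 ≤ x.2 := by
  rw [eq_sup]
  show x.1 * x.2⁻¹ * (x.2 ⊔ y.1) = x.1 ↔ _
  rw [mul_assoc, mul_eq_left, inv_mul_eq_one, eq_comm, sup_eq_left]

theorem snd_eq_iff (x y : G × G) : (Smul x y).2 = y.2 ↔ x.2 ≤ y.1 := by
  rw [eq_sup]
  show y.2 * y.1⁻¹ * (x.2 ⊔ y.1) = y.2 ↔ _
  rw [mul_assoc, mul_eq_left, inv_mul_eq_one, eq_comm, sup_eq_right]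

theorem eq_of_sandwich_eq_one {a b c d : G} (h : Smul (Smul (1, a) (c, d)) (b, 1) = (1, 1)) :
    c ≤ a ∧ b = d * c⁻¹ * a := by
  set w := Smul (1, a) (c, d)
  have hw : w.1 = 1 := le_antisymm
    (by simpa [h] using fst_le w (b, 1)) (by simpa using fst_le (1, a) (c, d))
  have hb : w.2 ≤ b := (snd_eq_iff w (b, 1)).1 (by simp [h])
  have hb' : b ≤ w.2 := (fst_eq_iff w (b, 1)).1 (by rw [h, hw])
  have hca : c ≤ a := (fst_eq_iff (1, a) (c, d)).1 hw
  refine ⟨hca, le_antisymm hb' hb |>.trans ?_⟩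
  simp [w, eq_sup, sup_eq_left.2 hca]

theorem eq_of_sandwich_eq_one_of_sandwich_eq_one {a b c d : G}
    (h : Smul (Smul (1, a) (c, d)) (b, 1) = (1, 1))
    (h' : Smul (Smul (1, c) (a, b)) (d, 1) = (1, 1)) : (a, b) = (c, d) := by
  obtain ⟨hca, rfl⟩ := eq_of_sandwich_eq_one h
  obtain ⟨hac, -⟩ := eq_of_sandwich_eq_one h'
  obtain rfl := le_antisymm hca hac
  simp

end Smul

section Restriction

variable {G : Type*} [CommGroup G] [LinearOrder G]

structure IsSmulRestriction {S : Type*} (m : S → S → S) (ι : S → G × G) (P : Set G) : Prop where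
  injective : Function.Injective ι
  map_mul : ∀ x y, ι (m x y) = Smul (ι x) (ι y)
  range_eq : Set.range ι = P ×ˢ P

structure IsSmulCongruenceOn (P : Set G) (R : G × G → G × G → Prop) : Prop where
  mem_of_rel {p q : G × G} : R p q → p ∈ P ×ˢ P
  refl {p : G × G} : p ∈ P ×ˢ P → R p p
  symm {p q : G × G} : R p q → R q p
  trans {p q r : G × G} : R p q → R q r → R p r
  smul_left {p q r : G × G} : r ∈ P ×ˢ P → R p q → R (Smul r p) (Smul r q)
  smul_right {p q r : G × G} : r ∈ P ×ˢ P → R p q → R (Smul p r) (Smul q r)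

theorem isSmulRestriction_id : IsSmulRestriction (Smul (G := G)) id Set.univ :=
  ⟨Function.injective_id, fun _ _ => rfl, by simp⟩

theorem isSmulRestriction_val [IsOrderedMonoid G] :
    IsSmulRestriction (SmulP (G := G)) Subtype.val (Set.Ici 1) :=
  ⟨Subtype.val_injective, fun _ _ => rfl, Subtype.range_coe_subtype⟩

namespace IsSmulRestriction

variable {S : Type*} {m : S → S → S} {ι : S → G × G} {P : Set G} {c : S → S → Prop}
  (hS : IsSmulRestriction m ι P)
include hS

theorem assoc [IsOrderedMonoid G] (x y z : S) : m (m x y) z = m x (m y z) :=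
  hS.injective (by simp only [hS.map_mul, Smul.assoc])

theorem exists_eq {p : G × G} (hp : p ∈ P ×ˢ P) : ∃ s, ι s = p := by
  rwa [← hS.range_eq] at hp

theorem mem (s : S) : ι s ∈ P ×ˢ P :=
  hS.range_eq ▸ Set.mem_range_self s

theorem rel_of_map_rel {s t : S} (h : Relation.Map c ι ι (ι s) (ι t)) : c s t := by
  obtain ⟨s', t', hst, hs, ht⟩ := h
  rwa [← hS.injective hs, ← hS.injective ht]

theorem isSmulCongruenceOn_map (hc : IsSgCongruence m c) :
    IsSmulCongruenceOn P (Relation.Map c ι ι) where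
  mem_of_rel := by
    rintro _ _ ⟨s, t, -, rfl, rfl⟩
    exact hS.mem s
  refl hp := by
    obtain ⟨s, rfl⟩ := hS.exists_eq hp
    exact ⟨s, s, hc.1.refl s, rfl, rfl⟩
  symm := by
    rintro _ _ ⟨s, t, hst, rfl, rfl⟩
    exact ⟨t, s, hc.1.symm hst, rfl, rfl⟩
  trans := by
    rintro _ _ _ ⟨s, t, hst, rfl, rfl⟩ ⟨t', u, htu, ht, rfl⟩
    rw [hS.injective ht] at htu
    exact ⟨s, u, hc.1.trans hst htu, rfl, rfl⟩
  smul_left hr := by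
    rintro ⟨s, t, hst, rfl, rfl⟩
    obtain ⟨u, rfl⟩ := hS.exists_eq hr
    exact ⟨m u s, m u t, (hc.2 s t u hst).1, hS.map_mul u s, hS.map_mul u t⟩
  smul_right hr := by
    rintro ⟨s, t, hst, rfl, rfl⟩
    obtain ⟨u, rfl⟩ := hS.exists_eq hr
    exact ⟨m s u, m t u, (hc.2 s t u hst).2, hS.map_mul s u, hS.map_mul t u⟩

theorem isGroupCongruence_of_rel_diag (hc : IsSgCongruence m c) (h1 : (1 : G) ∈ P)
    (hdiag : ∀ s t, s ∈ P → t ∈ P → Relation.Map c ι ι (s, s) (t, t)) :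
    IsGroupCongruence m c := by
  have hR := hS.isSmulCongruenceOn_map hc
  obtain ⟨e, he⟩ := hS.exists_eq (p := (1, 1)) ⟨h1, h1⟩
  refine ⟨e, fun x => ?_, fun x => ?_⟩ <;> rcases hx : ι x with ⟨a, b⟩ <;>
    have hab : (a, b) ∈ P ×ˢ P := hx ▸ hS.mem x
  · refine ⟨hS.rel_of_map_rel ?_, hS.rel_of_map_rel ?_⟩
    · simpa only [hS.map_mul, he, hx, Smul.of_eq] using hR.smul_right hab (hdiag 1 a h1 hab.1)
    · simpa only [hS.map_mul, he, hx, Smul.of_eq] using hR.smul_left hab (hdiag 1 b h1 hab.2)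
  · obtain ⟨y, hy⟩ := hS.exists_eq (p := (b, a)) ⟨hab.2, hab.1⟩
    refine ⟨y, hS.rel_of_map_rel ?_, hS.rel_of_map_rel ?_⟩
    · simpa only [hS.map_mul, he, hx, hy, Smul.of_eq] using hdiag a 1 hab.1 h1
    · simpa only [hS.map_mul, he, hx, hy, Smul.of_eq] using hdiag b 1 hab.2 h1

end IsSmulRestriction

end Restriction

namespace IsSmulCongruenceOn

variable {G : Type*} [CommGroup G] [LinearOrder G]
  {P : Set G} {R : G × G → G × G → Prop} (hR : IsSmulCongruenceOn P R)
include hR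

theorem rel_sandwich (h1 : (1 : G) ∈ P) {a b c d : G} (h : R (a, b) (c, d)) :
    R (1, 1) (Smul (Smul (1, a) (c, d)) (b, 1)) := by
  obtain ⟨ha, hb⟩ := hR.mem_of_rel h
  simpa only [Smul.of_eq] using hR.smul_right (r := (b, 1)) ⟨hb, h1⟩
    (hR.smul_left (r := (1, a)) ⟨h1, ha⟩ h)

theorem exists_one_lt_rel_diag_of_rel_one {z : G × G} (h : R (1, 1) z) (hz : z ≠ (1, 1))
    (hz₁ : 1 ≤ z.1) (hz₂ : 1 ≤ z.2) : ∃ q, 1 < q ∧ R (1, 1) (q, q) := by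
  obtain ⟨z₁, z₂⟩ := z
  obtain ⟨hz₁P, hz₂P⟩ := hR.mem_of_rel (hR.symm h)
  rcases hz₂.lt_or_eq with hz₂ | rfl
  · refine ⟨z₂, hz₂, hR.trans h (hR.symm ?_)⟩
    simpa [Smul.of_eq, Smul.eq_sup, hz₂.le] using hR.smul_right (r := (z₂, z₂)) ⟨hz₂P, hz₂P⟩ h
  · have hz₁ : 1 < z₁ := hz₁.lt_of_ne' (by simpa using hz)
    refine ⟨z₁, hz₁, hR.trans h (hR.symm ?_)⟩
    simpa [Smul.of_eq, Smul.eq_sup, hz₁.le] using hR.smul_left (r := (z₁, z₁)) ⟨hz₁P, hz₁P⟩ h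

theorem rel_mul (h1 : (1 : G) ∈ P) {g u v : G} (hg : R (1, 1) (g, g)) (hg₁ : 1 ≤ g) (hu : u ∈ P)
    (hv : v ∈ P) : R (u, v) (u * g, v * g) := by
  have h := hR.smul_right (r := (1, v)) ⟨h1, hv⟩ (hR.smul_left (r := (u, 1)) ⟨hu, h1⟩ hg)
  simpa [Smul.eq_sup, hg₁] using h

theorem rel_diag_pow (h1 : (1 : G) ∈ P) {q : G} (hq : R (1, 1) (q, q)) (hq₁ : 1 ≤ q) (n : ℕ) :
    R (1, 1) (q ^ n, q ^ n) := by
  induction n with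
  | zero => simpa using hR.refl (p := (1, 1)) ⟨h1, h1⟩
  | succ n ih =>
    have hqn : q ^ n ∈ P := (hR.mem_of_rel (hR.symm ih)).1
    simpa only [pow_succ] using hR.trans ih (hR.rel_mul h1 hq hq₁ hqn hqn)

variable [IsOrderedMonoid G]

/-- Sandwiching between `(1, a)` and `(b, 1)` sends `(a, b)` to `(1, 1)`, and sends `(c, d)` to
`(1, 1)` only if `c ≤ a` and `b = d·c⁻¹·a`; so for one of the two orders of `x` and `y` the other
side is an element `z ≠ (1, 1)` with `z ≥ (1, 1)`. -/
theorem exists_one_lt_rel_diag (h1 : (1 : G) ∈ P) {x y : G × G} (h : R x y) (hne : x ≠ y) :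
    ∃ q, 1 < q ∧ R (1, 1) (q, q) := by
  obtain ⟨a, b⟩ := x
  obtain ⟨c, d⟩ := y
  have key : ∀ {a b c d : G}, R (a, b) (c, d) →
      Smul (Smul (1, a) (c, d)) (b, 1) ≠ (1, 1) → ∃ q, 1 < q ∧ R (1, 1) (q, q) :=
    fun h hz => hR.exists_one_lt_rel_diag_of_rel_one (hR.rel_sandwich h1 h) hz
      (Smul.fst_le (1, _) _ |>.trans (Smul.fst_le _ _)) (Smul.snd_le _ (_, 1))
  by_cases hz : Smul (Smul (1, a) (c, d)) (b, 1) = (1, 1)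
  · exact key (hR.symm h) fun hz' => hne (Smul.eq_of_sandwich_eq_one_of_sandwich_eq_one hz hz')
  · exact key h hz

theorem rel_diag_of_le (h1 : (1 : G) ∈ P) (harch : IsArchGroup G) {q s t : G} (hq₁ : 1 < q)
    (hq : R (1, 1) (q, q)) (hs : s ∈ P) (ht : t ∈ P) (hst : s ≤ t) : R (s, s) (t, t) := by
  rcases hst.eq_or_lt with rfl | hst
  · exact hR.refl ⟨hs, hs⟩
  obtain ⟨k, -, hk⟩ := (harch q (s⁻¹ * t) hq₁ (by simpa using hst)).1
  have hqk := hR.rel_diag_pow h1 hq hq₁.le k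
  have hshift := hR.rel_mul h1 hqk (one_le_pow_of_one_le' hq₁.le k) hs hs
  have htk : t ≤ s * q ^ k := by simpa [mul_comm] using hk
  have h := hR.smul_left (r := (t, t)) ⟨ht, ht⟩ hshift
  rw [Smul.diag, Smul.diag, sup_eq_left.2 hst.le, sup_eq_right.2 htk] at h
  exact hR.trans hshift (hR.symm h)

theorem rel_diag (h1 : (1 : G) ∈ P) (harch : IsArchGroup G) {q s t : G} (hq₁ : 1 < q)
    (hq : R (1, 1) (q, q)) (hs : s ∈ P) (ht : t ∈ P) : R (s, s) (t, t) := by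
  rcases le_total s t with hst | hts
  · exact hR.rel_diag_of_le h1 harch hq₁ hq hs ht hst
  · exact hR.symm (hR.rel_diag_of_le h1 harch hq₁ hq ht hs hts)

end IsSmulCongruenceOn

theorem isGroupCongruence_of_isArchGroup {G : Type*} [CommGroup G] [LinearOrder G]
    [IsOrderedMonoid G] (harch : IsArchGroup G) {S : Type*} {m : S → S → S} {ι : S → G × G}
    {P : Set G} (hS : IsSmulRestriction m ι P) (h1 : (1 : G) ∈ P) {c : S → S → Prop}
    (hc : IsSgCongruence m c) (hnt : IsNontrivialRel c) : IsGroupCongruence m c := by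
  have hR := hS.isSmulCongruenceOn_map hc
  obtain ⟨⟨x, y, hxy, hne⟩, -⟩ := hnt
  obtain ⟨q, hq₁, hq⟩ := hR.exists_one_lt_rel_diag h1 ⟨x, y, hxy, rfl, rfl⟩ (hS.injective.ne hne)
  exact hS.isGroupCongruence_of_rel_diag hc h1 fun s t hs ht => hR.rel_diag h1 harch hq₁ hq hs ht

theorem IsGroupCongruence.rel_of_mul_self {S : Type*} {m : S → S → S} {c : S → S → Prop}
    (hg : IsGroupCongruence m c) (hassoc : ∀ x y z, m (m x y) z = m x (m y z))
    (hc : IsSgCongruence m c) {x y : S} (hx : m x x = x) (hy : m y y = y) : c x y := by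
  obtain ⟨e, he, hinv⟩ := hg
  have rel_e : ∀ x, m x x = x → c x e := fun x hx => by
    obtain ⟨x', hxx', -⟩ := hinv x
    have h := (hc.2 _ _ x hxx').1
    rw [← hassoc, hx] at h
    exact hc.1.trans (hc.1.trans (hc.1.symm (he x).2) (hc.1.symm h)) hxx'
  exact hc.1.trans (rel_e x hx) (hc.1.symm (rel_e y hy))

section NonArchimedean

variable {G : Type*} [CommGroup G] [LinearOrder G]

theorem exists_pow_lt_of_not_isArchGroup (h : ¬IsArchGroup G) :
    ∃ α β : G, 1 < α ∧ ∀ n : ℕ, α ^ n < β := by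
  simp only [IsArchGroup, not_forall, not_and_or, not_exists, not_le] at h
  obtain ⟨a, b, ha, hb, h | h⟩ := h
  · refine ⟨a, b, ha, fun n => ?_⟩
    rcases n.eq_zero_or_pos with rfl | hn
    exacts [by simpa using hb, (h n).resolve_left (not_not.2 hn)]
  · refine ⟨b, a, hb, fun n => ?_⟩
    rcases n.eq_zero_or_pos with rfl | hn
    exacts [by simpa using ha, (h n).resolve_left (not_not.2 hn)]

variable [IsOrderedMonoid G]

theorem MulArchimedeanClass.mk_sup_congr {A : MulArchimedeanClass G} {a a' b b' : G}
    (ha : (a : G ⧸ A.closedBallSubgroup) = a') (hb : (b : G ⧸ A.closedBallSubgroup) = b') :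
    ((a ⊔ b : G) : G ⧸ A.closedBallSubgroup) = (a' ⊔ b' : G) := by
  have key : ∀ {a a' b : G}, (a : G ⧸ A.closedBallSubgroup) = a' →
      ((a ⊔ b : G) : G ⧸ A.closedBallSubgroup) = (a' ⊔ b : G) := by
    intro a a' b h
    rw [QuotientGroup.eq_iff_div_mem, mem_closedBallSubgroup_iff] at h ⊢
    exact h.trans (mk_le_mk_of_mabs (mabs_sup_div_sup_le_mabs a a' b))
  rw [key ha, sup_comm, key hb, sup_comm]

def ProdModEq (H : Subgroup G) (p q : G × G) : Prop :=
  (p.1 : G ⧸ H) = q.1 ∧ (p.2 : G ⧸ H) = q.2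

theorem ProdModEq.smul {A : MulArchimedeanClass G} {p p' q q' : G × G}
    (hp : ProdModEq A.closedBallSubgroup p p') (hq : ProdModEq A.closedBallSubgroup q q') :
    ProdModEq A.closedBallSubgroup (Smul p q) (Smul p' q') := by
  have hsup := MulArchimedeanClass.mk_sup_congr hp.2 hq.1
  simp only [ProdModEq, Smul.eq_sup, QuotientGroup.mk_mul, QuotientGroup.mk_inv]
  rw [hsup, hp.1, hp.2, hq.1, hq.2]
  exact ⟨rfl, rfl⟩

theorem exists_not_isGroupCongruence {α β : G} (hα : 1 < α) (hβ : ∀ n : ℕ, α ^ n < β)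
    {S : Type*} {m : S → S → S} {ι : S → G × G} {P : Set G} (hS : IsSmulRestriction m ι P)
    (hP : Set.Ici 1 ⊆ P) :
    ∃ c : S → S → Prop, IsSgCongruence m c ∧ IsNontrivialRel c ∧ ¬IsGroupCongruence m c := by
  set H := (MulArchimedeanClass.mk α).closedBallSubgroup
  have hαH : α ∈ H := MulArchimedeanClass.mem_closedBallSubgroup_iff.2 le_rfl
  have hβ₁ : 1 ≤ β := by simpa using (hβ 0).le
  have hβH : β ∉ H := by
    rw [MulArchimedeanClass.mem_closedBallSubgroup_iff, MulArchimedeanClass.mk_le_mk]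
    rintro ⟨n, hn⟩
    rw [mabs_of_one_le hα.le, mabs_of_one_le hβ₁] at hn
    exact (hβ n).not_ge hn
  let c : S → S → Prop := fun s t => ProdModEq H (ι s) (ι t)
  have hc : IsSgCongruence m c := by
    refine ⟨⟨fun _ => ⟨rfl, rfl⟩, fun h => ⟨h.1.symm, h.2.symm⟩,
      fun h h' => ⟨h.1.trans h'.1, h.2.trans h'.2⟩⟩, fun x y s h => ?_⟩
    simp only [c, hS.map_mul]
    exact ⟨ProdModEq.smul ⟨rfl, rfl⟩ h, ProdModEq.smul h ⟨rfl, rfl⟩⟩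
  obtain ⟨s₀, hs₀⟩ := hS.exists_eq (p := (1, 1)) ⟨hP le_rfl, hP le_rfl⟩
  obtain ⟨s₁, hs₁⟩ := hS.exists_eq (p := (1, α)) ⟨hP le_rfl, hP hα.le⟩
  obtain ⟨sβ, hsβ⟩ := hS.exists_eq (p := (β, β)) ⟨hP hβ₁, hP hβ₁⟩
  have hidem : ∀ {s : S} {a : G}, ι s = (a, a) → m s s = s := fun hs =>
    hS.injective (by rw [hS.map_mul, hs, Smul.of_eq])
  have hsep : ¬c s₀ sβ := by
    rintro ⟨-, h⟩
    exact hβH (by simpa [hs₀, hsβ, QuotientGroup.eq_iff_div_mem] using h.symm)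
  refine ⟨c, hc, ⟨⟨s₀, s₁, ?_, ?_⟩, s₀, sβ, hsep⟩, fun hg => ?_⟩
  · refine ⟨by rw [hs₀, hs₁], ?_⟩
    rw [hs₀, hs₁]
    exact ((QuotientGroup.eq_one_iff α).2 hαH).symm
  · rintro rfl
    exact hα.ne' (congrArg Prod.snd (hs₁.symm.trans hs₀))
  · exact hsep (hg.rel_of_mul_self hS.assoc hc (hidem hs₀) (hidem hsβ))

end NonArchimedean

theorem isArchGroup_iff_forall_isGroupCongruence {G : Type*} [CommGroup G] [LinearOrder G]
    [IsOrderedMonoid G] {S : Type*} {m : S → S → S} {ι : S → G × G} {P : Set G}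
    (hS : IsSmulRestriction m ι P) (hP : Set.Ici 1 ⊆ P) :
    IsArchGroup G ↔
      ∀ c : S → S → Prop, IsSgCongruence m c → IsNontrivialRel c → IsGroupCongruence m c := by
  refine ⟨fun harch c => isGroupCongruence_of_isArchGroup harch hS (hP le_rfl), fun h => ?_⟩
  by_contra hna
  obtain ⟨α, β, hα, hβ⟩ := exists_pow_lt_of_not_isArchGroup hna
  obtain ⟨c, hc, hnt, hng⟩ := exists_not_isGroupCongruence hα hβ hS hP
  exact hng (h c hc hnt)

/-- For a commutative linearly ordered group `G`, the following are equivalent: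
(i) `G` is archimedean; (ii) every non-trivial congruence on `S_G` is a group
congruence; (iii) every non-trivial congruence on `S_G⁺` is a group congruence. -/
theorem stmt10 {G : Type*} [CommGroup G] [LinearOrder G] [IsOrderedMonoid G] :
    (IsArchGroup G ↔
      ∀ c : (G × G) → (G × G) → Prop,
        IsSgCongruence (Smul (G := G)) c → IsNontrivialRel c →
          IsGroupCongruence (Smul (G := G)) c) ∧
    (IsArchGroup G ↔
      ∀ c : PosS G → PosS G → Prop,
        IsSgCongruence (SmulP (G := G)) c → IsNontrivialRel c →
          IsGroupCongruence (SmulP (G := G)) c) :=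
  ⟨isArchGroup_iff_forall_isGroupCongruence isSmulRestriction_id (Set.subset_univ _),
    isArchGroup_iff_forall_isGroupCongruence isSmulRestriction_val subset_rfl⟩
end

section
/- Let G be a linearly ordered d-group. Then the multiplication on T_G = G × G × {0,1} given by (g,h,s)·(k,l,t) = (a,b,r), where a = (h ∨ k)·h⁻¹·g, b = (h ∨ k)·k⁻¹·l, and r = t if h < k, r = s if h > k, r = min(s,t) if h = k, is associative, and T_G is an inverse semigroup: for every x = (g,h,s) ∈ T_G the element y = (h,g,s) satisfies x·y·x = x and y·x·y = y, and y is the unique element of T_G with these two properties. -/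
variable {G : Type*} [Group G] [LinearOrder G]
  [CovariantClass G G (· * ·) (· ≤ ·)] [CovariantClass G G (Function.swap (· * ·)) (· ≤ ·)]

/-- The multiplication of the semigroup `T_G` on `G × G × {0,1}` (with `{0,1}` modelled
by `Bool`, `0 = false < 1 = true`): `(g,h,s)·(k,l,t) = ((h∨k)·h⁻¹·g, (h∨k)·k⁻¹·l, r)`
where `r = t` if `h < k`, `r = s` if `h > k`, and `r = min s t` if `h = k`. -/
def Tmul (x y : G × G × Bool) : G × G × Bool :=
  (max x.2.1 y.1 * x.2.1⁻¹ * x.1,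
   max x.2.1 y.1 * y.1⁻¹ * y.2.1,
   if x.2.1 < y.1 then y.2.2 else if y.1 < x.2.1 then x.2.2 else min x.2.2 y.2.2)

/-! An element `(g, h, s)` is the partial translation `x ↦ x * (g⁻¹ * h)` on the cone at `g`
(closed if `s`, open otherwise). It is determined by its translation `g⁻¹ * h` and by its cone,
coded as `(g, s)` in the lexicographic order on `G × Boolᵒᵈ`, where a larger code means a smaller
cone. Translations multiply under composition, and the cone of `x · y` is the intersection of the
cone of `x` with the preimage of the cone of `y`, whose code is the maximum of the two codes.
Right translation is an order automorphism of the codes, so associativity reduces to that of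
`max`, and the inverse-semigroup laws to inequalities between codes. -/

open OrderDual

section PartialTranslation

variable {α : Type*} [Group α]

def translateCone (d : α) (c : Lex (α × Boolᵒᵈ)) : Lex (α × Boolᵒᵈ) :=
  toLex ((ofLex c).1 * d, (ofLex c).2)

def Tcone (x : α × α × Bool) : Lex (α × Boolᵒᵈ) := toLex (x.1, toDual x.2.2)

def Ttranslation (x : α × α × Bool) : α := x.1⁻¹ * x.2.1

def Tinv (x : α × α × Bool) : α × α × Bool := (x.2.1, x.1, x.2.2)

theorem translateCone_translateCone (d e : α) (c : Lex (α × Boolᵒᵈ)) :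
    translateCone e (translateCone d c) = translateCone (d * e) c := by
  simp [translateCone, mul_assoc]

theorem translateCone_one (c : Lex (α × Boolᵒᵈ)) : translateCone 1 c = c := by
  simp [translateCone]

theorem eq_of_Tcone_eq_of_Ttranslation_eq {x y : α × α × Bool} (hD : Tcone x = Tcone y)
    (hS : Ttranslation x = Ttranslation y) : x = y := by
  obtain ⟨g, h, s⟩ := x
  obtain ⟨k, l, t⟩ := y
  simp only [Tcone, Ttranslation, EmbeddingLike.apply_eq_iff_eq, Prod.mk.injEq] at hD hS
  obtain ⟨rfl, rfl⟩ := hD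
  simp_all

theorem Tcone_Tinv (x : α × α × Bool) :
    Tcone (Tinv x) = translateCone (Ttranslation x) (Tcone x) := by
  simp [Tcone, Tinv, translateCone, Ttranslation]

theorem Ttranslation_Tinv (x : α × α × Bool) : Ttranslation (Tinv x) = (Ttranslation x)⁻¹ := by
  simp [Ttranslation, Tinv]

variable [LinearOrder α]

theorem Ttranslation_Tmul (x y : α × α × Bool) :
    Ttranslation (Tmul x y) = Ttranslation x * Ttranslation y := by
  simp only [Ttranslation, Tmul]
  group

variable [CovariantClass α α (Function.swap (· * ·)) (· ≤ ·)]

theorem translateCone_strictMono (d : α) : StrictMono (translateCone d) := by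
  intro c c' h
  simpa [translateCone, Prod.Lex.toLex_lt_toLex, Prod.Lex.lt_iff] using h

theorem translateCone_max (d : α) (c c' : Lex (α × Boolᵒᵈ)) :
    translateCone d (max c c') = max (translateCone d c) (translateCone d c') :=
  (translateCone_strictMono d).monotone.map_max

theorem Tcone_Tmul (x y : α × α × Bool) :
    Tcone (Tmul x y) = max (Tcone x) (translateCone (Ttranslation x)⁻¹ (Tcone y)) := by
  obtain ⟨g, h, s⟩ := x
  obtain ⟨k, l, t⟩ := y
  have htranslation : k * (g⁻¹ * h)⁻¹ = k * h⁻¹ * g := by group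
  simp only [Tcone, Tmul, translateCone, Ttranslation, ofLex_toLex, htranslation]
  rcases lt_trichotomy h k with hk | rfl | hk
  · have hlt : g < k * h⁻¹ * g :=
      calc g = h * h⁻¹ * g := by group
        _ < k * h⁻¹ * g := by gcongr
    rw [if_pos hk, max_eq_right hk.le, max_eq_right (Prod.Lex.toLex_lt_toLex.2 (Or.inl hlt)).le]
  · have hmono : Monotone fun b : Boolᵒᵈ => toLex (g, b) :=
      fun _ _ hb => Prod.Lex.toLex_le_toLex.2 (Or.inr ⟨rfl, hb⟩)
    simp only [lt_irrefl, if_false, max_self, mul_inv_cancel, one_mul, toDual_min]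
    exact hmono.map_max
  · have hlt : k * h⁻¹ * g < g :=
      calc k * h⁻¹ * g < h * h⁻¹ * g := by gcongr
        _ = g := by group
    rw [if_neg hk.not_gt, if_pos hk, max_eq_left hk.le, mul_inv_cancel, one_mul,
      max_eq_left (Prod.Lex.toLex_lt_toLex.2 (Or.inl hlt)).le]

theorem Tmul_assoc (x y z : α × α × Bool) : Tmul (Tmul x y) z = Tmul x (Tmul y z) := by
  refine eq_of_Tcone_eq_of_Ttranslation_eq ?_ ?_
  · simp only [Tcone_Tmul, Ttranslation_Tmul, translateCone_max, translateCone_translateCone,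
      mul_inv_rev, max_assoc]
  · simp only [Ttranslation_Tmul, mul_assoc]

theorem Tmul_Tinv_Tmul (x : α × α × Bool) : Tmul (Tmul x (Tinv x)) x = x := by
  refine eq_of_Tcone_eq_of_Ttranslation_eq ?_ ?_
  · simp only [Tcone_Tmul, Ttranslation_Tmul, Ttranslation_Tinv, Tcone_Tinv,
      translateCone_translateCone, mul_inv_cancel, inv_one, translateCone_one, max_self]
  · simp only [Ttranslation_Tmul, Ttranslation_Tinv, mul_inv_cancel, one_mul]

theorem Ttranslation_eq_inv_of_Tmul_Tmul_eq {x y : α × α × Bool} (h : Tmul (Tmul x y) x = x) :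
    Ttranslation y = (Ttranslation x)⁻¹ := by
  have hS := congrArg Ttranslation h
  rwa [Ttranslation_Tmul, Ttranslation_Tmul, mul_eq_right, mul_eq_one_iff_eq_inv'] at hS

theorem translateCone_Tcone_le_of_Tmul_Tmul_eq {x y : α × α × Bool}
    (h : Tmul (Tmul x y) x = x) : translateCone (Ttranslation x)⁻¹ (Tcone y) ≤ Tcone x := by
  have hD := congrArg Tcone h
  rw [Tcone_Tmul, Tcone_Tmul, Ttranslation_Tmul, Ttranslation_eq_inv_of_Tmul_Tmul_eq h,
    mul_inv_cancel, inv_one, translateCone_one] at hD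
  exact (le_max_right _ _).trans ((le_max_left _ _).trans hD.le)

theorem eq_Tinv_of_Tmul_Tmul_eq {x y : α × α × Bool} (hx : Tmul (Tmul x y) x = x)
    (hy : Tmul (Tmul y x) y = y) : y = Tinv x := by
  have hS := Ttranslation_eq_inv_of_Tmul_Tmul_eq hx
  refine eq_of_Tcone_eq_of_Ttranslation_eq (le_antisymm ?_ ?_) (by rw [hS, Ttranslation_Tinv])
  · have := (translateCone_strictMono (Ttranslation x)).monotone
      (translateCone_Tcone_le_of_Tmul_Tmul_eq hx)
    rwa [translateCone_translateCone, inv_mul_cancel, translateCone_one, ← Tcone_Tinv] at this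
  · have := translateCone_Tcone_le_of_Tmul_Tmul_eq hy
    rwa [hS, inv_inv, ← Tcone_Tinv] at this

end PartialTranslation

theorem stmt11_general {G : Type*} [Group G] [LinearOrder G]
    [CovariantClass G G (Function.swap (· * ·)) (· ≤ ·)] :
    (∀ x y z : G × G × Bool, Tmul (Tmul x y) z = Tmul x (Tmul y z)) ∧
    ∀ x : G × G × Bool,
      Tmul (Tmul x (x.2.1, x.1, x.2.2)) x = x ∧
      Tmul (Tmul (x.2.1, x.1, x.2.2) x) (x.2.1, x.1, x.2.2) = (x.2.1, x.1, x.2.2) ∧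
      ∀ y : G × G × Bool,
        Tmul (Tmul x y) x = x → Tmul (Tmul y x) y = y → y = (x.2.1, x.1, x.2.2) :=
  ⟨Tmul_assoc, fun x =>
    ⟨Tmul_Tinv_Tmul x, Tmul_Tinv_Tmul (Tinv x), fun _ => eq_Tinv_of_Tmul_Tmul_eq⟩⟩

/-- For a linearly ordered `d`-group `G`, the multiplication of `T_G` is associative and
`T_G` is an inverse semigroup: every `x = (g,h,s)` has `y = (h,g,s)` as its unique
element with `x·y·x = x` and `y·x·y = y`. -/
theorem stmt11 {G : Type*} [Group G] [LinearOrder G]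
    [CovariantClass G G (· * ·) (· ≤ ·)]
    [CovariantClass G G (Function.swap (· * ·)) (· ≤ ·)]
    (hd : ∀ g : G, 1 < g → ∃ x : G, 1 < x ∧ x < g) :
    (∀ x y z : G × G × Bool, Tmul (Tmul x y) z = Tmul x (Tmul y z)) ∧
    ∀ x : G × G × Bool,
      Tmul (Tmul x (x.2.1, x.1, x.2.2)) x = x ∧
      Tmul (Tmul (x.2.1, x.1, x.2.2) x) (x.2.1, x.1, x.2.2) = (x.2.1, x.1, x.2.2) ∧
      ∀ y : G × G × Bool,
        Tmul (Tmul x y) x = x → Tmul (Tmul y x) y = y → y = (x.2.1, x.1, x.2.2) :=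
  stmt11_general
end

section
/- Let G be an archimedean linearly ordered d-group and let 𝔠 be a non-trivial congruence on T_G. Then either the quotient semigroup T_G/𝔠 is a group, or 𝔠 equals the congruence ∼_id (identifying triples with equal first two coordinates), in which case T_G/𝔠 is isomorphic to the semigroup S_G. The analogous dichotomy holds for non-trivial congruences on T_G⁺, with quotient a group or isomorphic to S_G⁺. -/
variable {G : Type*} [Group G] [LinearOrder G]
  [CovariantClass G G (· * ·) (· ≤ ·)] [CovariantClass G G (Function.swap (· * ·)) (· ≤ ·)]

/-- The carrier of the semigroup `T_G⁺` on the positive cone. -/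
abbrev PosT (G : Type*) [Group G] [LinearOrder G] : Type _ :=
  {x : G × G × Bool // 1 ≤ x.1 ∧ 1 ≤ x.2.1}

theorem tmul_mem {x y : G × G × Bool} (hx : 1 ≤ x.1 ∧ 1 ≤ x.2.1) (hy : 1 ≤ y.1 ∧ 1 ≤ y.2.1) :
    1 ≤ (Tmul x y).1 ∧ 1 ≤ (Tmul x y).2.1 := by
  unfold Tmul
  refine ⟨one_le_mul ?_ hx.1, one_le_mul ?_ hy.2⟩
  · have h4 := mul_le_mul_left (le_max_left x.2.1 y.1) x.2.1⁻¹
    rwa [mul_inv_cancel] at h4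
  · have h4 := mul_le_mul_left (le_max_right x.2.1 y.1) y.1⁻¹
    rwa [mul_inv_cancel] at h4

/-- The multiplication of the semigroup `T_G⁺`. -/
def TmulP (x y : PosT G) : PosT G := ⟨Tmul x.1 y.1, tmul_mem x.2 y.2⟩

/-- The relation `∼_id` on `T_G`: `(g,h,s) ∼_id (k,l,t)` iff `g = k` and `h = l`. -/
def tidRel (x y : G × G × Bool) : Prop := x.1 = y.1 ∧ x.2.1 = y.2.1

/-- The relation `∼_id` on `T_G⁺`. -/
def tidRelP (x y : PosT G) : Prop := x.1.1 = y.1.1 ∧ x.1.2.1 = y.1.2.1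

/-!
Both semigroups are the subsemigroups of `T_G` of triples whose group coordinates lie in an
upper set `Q` (`Q = G` and `Q = G⁺`), and the argument works for any such `Q`.

If a congruence identifies two triples with different group coordinates, multiplying them by
suitable triples yields `(A,A,σ) ∼ (B,B,τ)` with `A < B`. For `A < p < B` (which exists as `G`
is a `d`-group), multiplying this on the left by `(g,p,1)` and on the right by `(p,g,1)` gives
`(g,g,1) ∼ (eg,eg,τ)` for all `g`, with `e = Bp⁻¹ > 1`. Iterating and using that `G` is
archimedean, every diagonal triple `(b,b,t)` lies between two congruent ones, which makes all
diagonal triples congruent. Their class is then an identity, and `(h,g,1)` is an inverse of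
`(g,h,s)`.

Otherwise the congruence only identifies triples with equal group coordinates; being
non-trivial, it identifies `(g,h,0)` and `(g,h,1)` for some, hence for all, `g, h`. So it is
`∼_id`, whose quotient is `S_G` via the projection to the group coordinates.
-/

section

omit [CovariantClass G G (· * ·) (· ≤ ·)]
  [CovariantClass G G (Function.swap (· * ·)) (· ≤ ·)]

section Tmul

variable {g h k l b : G} {s t σ : Bool}

theorem Tmul_of_lt (hhk : h < k) : Tmul (g, h, s) (k, l, t) = (k * h⁻¹ * g, l, t) := by
  simp [Tmul, max_eq_right hhk.le, hhk]

theorem Tmul_of_gt (hkh : k < h) : Tmul (g, h, s) (k, l, t) = (g, h * k⁻¹ * l, s) := by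
  simp [Tmul, max_eq_left hkh.le, hkh, hkh.not_gt]

theorem Tmul_self : Tmul (g, h, s) (h, l, t) = (g, l, s && t) := by
  simp [Tmul, Bool.min_eq_and]

theorem Tmul_diag_of_lt_snd (hb : b < h) : Tmul (g, h, s) (b, b, σ) = (g, h, s) := by
  rw [Tmul_of_gt hb, inv_mul_cancel_right]

theorem Tmul_diag_of_lt_fst (hb : b < g) : Tmul (b, b, σ) (g, h, s) = (g, h, s) := by
  rw [Tmul_of_lt hb, inv_mul_cancel_right]

theorem Tmul_diag_true_of_le_snd (hb : b ≤ h) : Tmul (g, h, s) (b, b, true) = (g, h, s) := by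
  rcases hb.lt_or_eq with hb | rfl
  · exact Tmul_diag_of_lt_snd hb
  · rw [Tmul_self, Bool.and_true]

theorem Tmul_diag_true_of_le_fst (hb : b ≤ g) : Tmul (b, b, true) (g, h, s) = (g, h, s) := by
  rcases hb.lt_or_eq with hb | rfl
  · exact Tmul_diag_of_lt_fst hb
  · rw [Tmul_self, Bool.true_and]

theorem Smul_fst_snd_Tmul (x y : G × G × Bool) :
    Smul (x.1, x.2.1) (y.1, y.2.1) = ((Tmul x y).1, (Tmul x y).2.1) := by
  obtain ⟨g, h, s⟩ := x
  obtain ⟨k, l, t⟩ := y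
  rcases lt_trichotomy h k with hhk | rfl | hkh
  · simp [Tmul_of_lt hhk, Smul, hhk]
  · simp [Tmul_self, Smul]
  · simp [Tmul_of_gt hkh, Smul, hkh.not_gt, hkh.ne']

end Tmul

theorem exists_surjective_Tmul_hom_Smul :
    ∃ f : G × G × Bool → G × G, Function.Surjective f ∧
      (∀ x y, f (Tmul x y) = Smul (f x) (f y)) ∧ ∀ x y, f x = f y ↔ tidRel x y :=
  ⟨fun x => (x.1, x.2.1), fun p => ⟨(p.1, p.2, true), rfl⟩,
    fun x y => (Smul_fst_snd_Tmul x y).symm, fun _ _ => Prod.ext_iff⟩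

def triples (Q : Set G) : Set (G × G × Bool) := {x | x.1 ∈ Q ∧ x.2.1 ∈ Q}

/-- `c` is a congruence on the subsemigroup of `T_G` of triples with group coordinates in `Q`;
nothing is required of `c` outside it. -/
structure IsCongruenceOn (Q : Set G) (c : G × G × Bool → G × G × Bool → Prop) : Prop where
  refl : ∀ {g h : G} (s : Bool), g ∈ Q → h ∈ Q → c (g, h, s) (g, h, s)
  symm : ∀ {x y}, c x y → c y x
  trans : ∀ {x y z}, c x y → c y z → c x z
  mul_left : ∀ {x y} {g h : G} (s : Bool), g ∈ Q → h ∈ Q → c x y →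
    c (Tmul (g, h, s) x) (Tmul (g, h, s) y)
  mul_right : ∀ {x y} {g h : G} (s : Bool), g ∈ Q → h ∈ Q → c x y →
    c (Tmul x (g, h, s)) (Tmul y (g, h, s))

namespace IsCongruenceOn

variable {Q : Set G} {c : G × G × Bool → G × G × Bool → Prop} {g h k l : G} {s t σ τ : Bool}

theorem rel_diag_of_inv_mul_eq (hc : IsCongruenceOn Q c) (hg : g ∈ Q) (hh : h ∈ Q)
    (hgk : g < k) (hratio : h⁻¹ * g = l⁻¹ * k) (hrel : c (g, h, s) (k, l, t)) :
    c (h, h, s) (l, l, t) := by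
  have hl : k * g⁻¹ * h = l := by
    calc k * g⁻¹ * h = k * (h⁻¹ * g)⁻¹ := by group
      _ = l := by rw [hratio]; group
  simpa only [Tmul_self, Bool.true_and, Tmul_of_lt hgk, hl] using hc.mul_left true hh hg hrel

theorem rel_diag_of_row (hc : IsCongruenceOn Q c) {p q : G} (hq : q ∈ Q) (hpq : p < q)
    (hrow : c (p, p, true) (q, p, true)) : c (p, p, true) (q, q, true) := by
  have := hc.mul_left true hq hq hrow
  rw [Tmul_diag_of_lt_snd hpq, Tmul_self, Bool.true_and] at this
  exact hc.symm (hc.trans this (hc.symm hrow))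

theorem rel_diag_of_lt_of_le (hc : IsCongruenceOn Q c) {a u b : G} (hu : u ∈ Q) (hau : a < u)
    (hub : u ≤ b) (hrel : c (a, a, σ) (b, b, τ)) : c (u, u, true) (b, b, τ) := by
  simpa only [Tmul_diag_of_lt_snd hau, Tmul_diag_true_of_le_fst hub] using
    hc.mul_left true hu hu hrel

theorem identity_inverse_of_rel_diag (hc : IsCongruenceOn Q c)
    (hdiag : ∀ a ∈ Q, ∀ b ∈ Q, ∀ s t, c (a, a, s) (b, b, t)) {a : G} (ha : a ∈ Q)
    (hg : g ∈ Q) (hh : h ∈ Q) :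
    (c (Tmul (a, a, true) (g, h, s)) (g, h, s) ∧ c (Tmul (g, h, s) (a, a, true)) (g, h, s)) ∧
      c (Tmul (g, h, s) (h, g, true)) (a, a, true) ∧
      c (Tmul (h, g, true) (g, h, s)) (a, a, true) := by
  have hmin : ∀ {x}, x ∈ Q → min a x ∈ Q := fun {x} hx => by
    rcases min_choice a x with hmin | hmin <;> rw [hmin] <;> assumption
  refine ⟨⟨?_, ?_⟩, ?_, ?_⟩
  · simpa only [Tmul_diag_true_of_le_fst (min_le_right a g)] using
      hc.mul_right s hg hh (hdiag a ha _ (hmin hg) true true)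
  · simpa only [Tmul_diag_true_of_le_snd (min_le_right a h)] using
      hc.mul_left s hg hh (hdiag a ha _ (hmin hh) true true)
  · simpa only [Tmul_self, Bool.and_true] using hdiag g hg a ha s true
  · simpa only [Tmul_self, Bool.true_and] using hdiag h hh a ha s true

theorem rel_iff_tidRel (hc : IsCongruenceOn Q c)
    (hle : ∀ x y : G × G × Bool, x ∈ triples Q → y ∈ triples Q → c x y → tidRel x y)
    (hnt : ∃ x y : G × G × Bool, x ∈ triples Q ∧ y ∈ triples Q ∧ c x y ∧ x ≠ y)
    {x y : G × G × Bool} (hx : x ∈ triples Q) (hy : y ∈ triples Q) :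
    c x y ↔ tidRel x y := by
  obtain ⟨⟨g₀, h₀, s₀⟩, ⟨k₀, l₀, t₀⟩, ⟨hg₀, hh₀⟩, hy₀, hrel₀, hne₀⟩ := hnt
  obtain ⟨rfl, rfl⟩ := hle _ _ ⟨hg₀, hh₀⟩ hy₀ hrel₀
  have hbit : ∀ {g h}, g ∈ Q → h ∈ Q → c (g, h, false) (g, h, true) := by
    intro g h hg hh
    have hrel := hc.mul_right true hh₀ hh (hc.mul_left true hg hg₀ hrel₀)
    simp only [Tmul_self, Bool.true_and, Bool.and_true] at hrel
    cases s₀ <;> cases t₀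
    exacts [absurd rfl hne₀, hrel, hc.symm hrel, absurd rfl hne₀]
  obtain ⟨g, h, s⟩ := x
  obtain ⟨k, l, t⟩ := y
  refine ⟨hle _ _ hx hy, ?_⟩
  rintro ⟨rfl, rfl⟩
  cases s <;> cases t
  exacts [hc.refl _ hx.1 hx.2, hbit hx.1 hx.2, hc.symm (hbit hx.1 hx.2), hc.refl _ hx.1 hx.2]

end IsCongruenceOn

theorem IsSgCongruence.isCongruenceOn_univ {c : G × G × Bool → G × G × Bool → Prop}
    (hc : IsSgCongruence Tmul c) : IsCongruenceOn Set.univ c where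
  refl _ _ _ := hc.1.refl _
  symm := hc.1.symm
  trans := hc.1.trans
  mul_left _ _ _ h := (hc.2 _ _ _ h).1
  mul_right _ _ _ h := (hc.2 _ _ _ h).2

def liftRel (c : PosT G → PosT G → Prop) (x y : G × G × Bool) : Prop :=
  ∃ (hx : 1 ≤ x.1 ∧ 1 ≤ x.2.1) (hy : 1 ≤ y.1 ∧ 1 ≤ y.2.1), c ⟨x, hx⟩ ⟨y, hy⟩

theorem liftRel_iff {c : PosT G → PosT G → Prop} {x y : PosT G} : liftRel c x.1 y.1 ↔ c x y :=
  ⟨fun ⟨_, _, h⟩ => h, fun h => ⟨x.2, y.2, h⟩⟩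

end

omit [CovariantClass G G (Function.swap (· * ·)) (· ≤ ·)] in
theorem exists_gt_of_ne {a b : G} (hab : a ≠ b) (x : G) : ∃ w, x < w := by
  rcases hab.lt_or_gt with hab | hab
  · exact ⟨x * (a⁻¹ * b), lt_mul_of_one_lt_right' x (lt_inv_mul_iff_lt.2 hab)⟩
  · exact ⟨x * (b⁻¹ * a), lt_mul_of_one_lt_right' x (lt_inv_mul_iff_lt.2 hab)⟩

omit [CovariantClass G G (· * ·) (· ≤ ·)] in
theorem denselyOrdered_of_forall_one_lt (hd : ∀ g : G, 1 < g → ∃ x : G, 1 < x ∧ x < g) :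
    DenselyOrdered G where
  dense a b hab := by
    obtain ⟨x, hx1, hxb⟩ := hd (b * a⁻¹) (lt_mul_inv_iff_lt.2 hab)
    exact ⟨x * a, lt_mul_of_one_lt_left' a hx1, lt_mul_inv_iff_mul_lt.1 hxb⟩

theorem lt_of_inv_mul_eq_inv_mul {g h k l : G} (hgk : g < k) (hratio : h⁻¹ * g = l⁻¹ * k) :
    h < l := by
  by_contra! hlh
  have hle : h⁻¹ * k ≤ l⁻¹ * k := mul_le_mul_left (inv_le_inv_iff.2 hlh) k
  exact (mul_lt_mul_right hgk h⁻¹).not_ge (hratio ▸ hle)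

namespace IsCongruenceOn

variable {Q : Set G} {c : G × G × Bool → G × G × Bool → Prop} {g h k l : G} {s t σ τ : Bool}

theorem exists_row (hQ : IsUpperSet Q) (hc : IsCongruenceOn Q c) (hg : g ∈ Q) (hh : h ∈ Q)
    (hk : k ∈ Q) (hratio : h⁻¹ * g ≠ l⁻¹ * k) (hrel : c (g, h, s) (k, l, t)) :
    ∃ p q, p ∈ Q ∧ q ∈ Q ∧ p ≠ q ∧ ∀ r ∈ Q, c (p, r, true) (q, r, true) := by
  obtain ⟨w, hw⟩ := exists_gt_of_ne hratio (max h l)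
  obtain ⟨hhw, hlw⟩ := max_lt_iff.1 hw
  refine ⟨w * h⁻¹ * g, w * l⁻¹ * k, hQ ?_ hg, hQ ?_ hk, ?_, fun r hr => ?_⟩
  · exact le_mul_of_one_le_left' (le_mul_inv_iff_le.2 hhw.le)
  · exact le_mul_of_one_le_left' (le_mul_inv_iff_le.2 hlw.le)
  · simpa only [mul_assoc, ne_eq, mul_right_inj] using hratio
  · simpa only [Tmul_of_lt hhw, Tmul_of_lt hlw] using hc.mul_right true (hQ hhw.le hh) hr hrel

theorem exists_rel_diag (hQ : IsUpperSet Q) (hc : IsCongruenceOn Q c) {x y : G × G × Bool}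
    (hx : x ∈ triples Q) (hy : y ∈ triples Q) (hrel : c x y) (hne : ¬tidRel x y) :
    ∃ A B σ τ, A < B ∧ A ∈ Q ∧ B ∈ Q ∧ c (A, A, σ) (B, B, τ) := by
  obtain ⟨g, h, s⟩ := x
  obtain ⟨k, l, t⟩ := y
  obtain ⟨hg, hh⟩ := hx
  obtain ⟨hk, hl⟩ := hy
  by_cases hratio : h⁻¹ * g = l⁻¹ * k
  · have hgk : g ≠ k := fun hgk => hne ⟨hgk, by rw [hgk] at hratio; simpa using hratio⟩
    rcases hgk.lt_or_gt with hgk | hkg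
    · have hdiag := hc.rel_diag_of_inv_mul_eq hg hh hgk hratio hrel
      exact ⟨h, l, s, t, lt_of_inv_mul_eq_inv_mul hgk hratio, hh, hl, hdiag⟩
    · have hdiag := hc.rel_diag_of_inv_mul_eq hk hl hkg hratio.symm (hc.symm hrel)
      exact ⟨l, h, t, s, lt_of_inv_mul_eq_inv_mul hkg hratio.symm, hl, hh, hdiag⟩
  · obtain ⟨p, q, hp, hq, hpq, hrow⟩ := hc.exists_row hQ hg hh hk hratio hrel
    rcases hpq.lt_or_gt with hpq | hqp
    · exact ⟨p, q, _, _, hpq, hp, hq, hc.rel_diag_of_row hq hpq (hrow p hp)⟩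
    · exact ⟨q, p, _, _, hqp, hq, hp, hc.rel_diag_of_row hp hqp (hc.symm (hrow q hq))⟩

omit [CovariantClass G G (· * ·) (· ≤ ·)] in
theorem exists_shift [DenselyOrdered G] (hQ : IsUpperSet Q) (hc : IsCongruenceOn Q c) {A B : G}
    (hA : A ∈ Q) (hAB : A < B) (hrel : c (A, A, σ) (B, B, τ)) :
    ∃ e, 1 < e ∧ ∀ g ∈ Q, c (g, g, true) (e * g, e * g, τ) := by
  obtain ⟨p, hAp, hpB⟩ := exists_between hAB
  have hp : p ∈ Q := hQ hAp.le hA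
  refine ⟨B * p⁻¹, lt_mul_inv_iff_lt.2 hpB, fun g hg => ?_⟩
  have hleft := hc.mul_left true hg hp hrel
  rw [Tmul_diag_of_lt_snd hAp, Tmul_of_lt hpB] at hleft
  simpa only [Tmul_self, Bool.and_true, Tmul_of_gt hpB] using hc.mul_right true hp hg hleft

section Shift

variable {e : G} (hQ : IsUpperSet Q) (hc : IsCongruenceOn Q c) (he : 1 < e)
  (hshift : ∀ g ∈ Q, c (g, g, true) (e * g, e * g, τ))

include hQ hc he hshift

omit [CovariantClass G G (· * ·) (· ≤ ·)] in
theorem rel_diag_mul_of_shift {g : G} (hg : g ∈ Q) (s t : Bool) :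
    c (g, g, s) (e * g, e * g, t) := by
  have hbit : ∀ g ∈ Q, ∀ s, c (g, g, s) (e * g, e * g, τ) := fun g hg s => by
    simpa only [Tmul_diag_true_of_le_fst le_rfl, Tmul_diag_of_lt_snd (lt_mul_of_one_lt_left' g he)]
      using hc.mul_right s hg hg (hshift g hg)
  have heg : e * g ∈ Q := hQ (le_mul_of_one_le_left' he.le) hg
  exact hc.trans (hbit g hg s) (hc.trans (hbit _ heg τ) (hc.symm (hbit _ heg t)))

theorem rel_diag_pow_mul_of_shift {g : G} (hg : g ∈ Q) (s t : Bool) (n : ℕ) :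
    c (g, g, s) (e ^ n * g, e ^ n * g, t) := by
  induction n generalizing t with
  | zero =>
    simpa only [pow_zero, one_mul] using
      hc.trans (rel_diag_mul_of_shift hQ hc he hshift hg s true)
        (hc.symm (rel_diag_mul_of_shift hQ hc he hshift hg t true))
  | succ n ih =>
    have hpow : e ^ n * g ∈ Q := hQ (le_mul_of_one_le_left' (one_le_pow_of_one_le' he.le n)) hg
    simpa only [pow_succ', mul_assoc] using
      hc.trans (ih t) (rel_diag_mul_of_shift hQ hc he hshift hpow t t)

end Shift

theorem rel_diag_of_shift (hQ : IsUpperSet Q) (hc : IsCongruenceOn Q c) (harch : IsArchGroup G)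
    {e : G} (he : 1 < e) (hshift : ∀ g ∈ Q, c (g, g, true) (e * g, e * g, τ)) {a b : G}
    (ha : a ∈ Q) (hb : b ∈ Q) (s t : Bool) : c (a, a, s) (b, b, t) := by
  have hpow := fun {g : G} (hg : g ∈ Q) => rel_diag_pow_mul_of_shift hQ hc he hshift hg
  suffices hlt : ∀ {a b : G}, a ∈ Q → b ∈ Q → a < b → ∀ s t, c (a, a, s) (b, b, t) by
    rcases lt_trichotomy a b with hab | rfl | hba
    · exact hlt ha hb hab s t
    · simpa using hpow ha s t 0
    · exact hc.symm (hlt hb ha hba t s)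
  intro a b ha hb hab s t
  obtain ⟨⟨m, -, hm⟩, -⟩ := harch e (b * a⁻¹) he (lt_mul_inv_iff_lt.2 hab)
  have hbound := rel_diag_of_lt_of_le hc hb hab (mul_inv_le_iff_le_mul.1 hm) (hpow ha s true m)
  exact hc.trans (hpow ha s true m) (hc.trans (hc.symm hbound) (by simpa using hpow hb true t 0))

theorem rel_diag_or_rel_iff_tidRel [DenselyOrdered G] (hQ : IsUpperSet Q)
    (hc : IsCongruenceOn Q c) (harch : IsArchGroup G)
    (hnt : ∃ x y : G × G × Bool, x ∈ triples Q ∧ y ∈ triples Q ∧ c x y ∧ x ≠ y) :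
    (∀ a ∈ Q, ∀ b ∈ Q, ∀ s t, c (a, a, s) (b, b, t)) ∨
      ∀ x y : G × G × Bool, x ∈ triples Q → y ∈ triples Q → (c x y ↔ tidRel x y) := by
  by_cases hle : ∀ x y : G × G × Bool, x ∈ triples Q → y ∈ triples Q → c x y → tidRel x y
  · exact .inr fun x y hx hy => hc.rel_iff_tidRel hle hnt hx hy
  · push Not at hle
    obtain ⟨x, y, hx, hy, hrel, hne⟩ := hle
    obtain ⟨A, B, σ, τ, hAB, hA, -, hdiag⟩ := hc.exists_rel_diag hQ hx hy hrel hne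
    obtain ⟨e, he, hshift⟩ := hc.exists_shift hQ hA hAB hdiag
    exact .inl fun a ha b hb => hc.rel_diag_of_shift hQ harch he hshift ha hb

end IsCongruenceOn

theorem IsSgCongruence.isCongruenceOn_Ici {c : PosT G → PosT G → Prop}
    (hc : IsSgCongruence TmulP c) : IsCongruenceOn (Set.Ici 1) (liftRel c) where
  refl _ hg hh := ⟨⟨hg, hh⟩, ⟨hg, hh⟩, hc.1.refl _⟩
  symm := fun ⟨hx, hy, h⟩ => ⟨hy, hx, hc.1.symm h⟩
  trans := fun ⟨hx, _, h⟩ ⟨_, hz, h'⟩ => ⟨hx, hz, hc.1.trans h h'⟩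
  mul_left s hg hh := fun ⟨_, _, h⟩ => ⟨_, _, (hc.2 _ _ ⟨(_, _, s), hg, hh⟩ h).1⟩
  mul_right s hg hh := fun ⟨_, _, h⟩ => ⟨_, _, (hc.2 _ _ ⟨(_, _, s), hg, hh⟩ h).2⟩

theorem IsSgCongruence.isGroupCongruence_or_eq_tidRel [DenselyOrdered G] (harch : IsArchGroup G)
    {c : G × G × Bool → G × G × Bool → Prop} (hc : IsSgCongruence Tmul c)
    (hnt : IsNontrivialRel c) : IsGroupCongruence Tmul c ∨ ∀ x y, c x y ↔ tidRel x y := by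
  have hc' := hc.isCongruenceOn_univ
  obtain ⟨⟨x, y, hrel, hne⟩, -⟩ := hnt
  refine (hc'.rel_diag_or_rel_iff_tidRel isUpperSet_univ harch
    ⟨x, y, ⟨trivial, trivial⟩, ⟨trivial, trivial⟩, hrel, hne⟩).imp (fun hdiag => ?_)
    fun hiff x y => hiff x y ⟨trivial, trivial⟩ ⟨trivial, trivial⟩
  have hgrp (x : G × G × Bool) :=
    hc'.identity_inverse_of_rel_diag hdiag (Set.mem_univ 1) (g := x.1) (h := x.2.1) (s := x.2.2)
      trivial trivial
  exact ⟨(1, 1, true), fun x => (hgrp x).1, fun x => ⟨(x.2.1, x.1, true), (hgrp x).2⟩⟩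

theorem IsSgCongruence.isGroupCongruence_or_eq_tidRelP [DenselyOrdered G] (harch : IsArchGroup G)
    {c : PosT G → PosT G → Prop} (hc : IsSgCongruence TmulP c)
    (hnt : IsNontrivialRel c) : IsGroupCongruence TmulP c ∨ ∀ x y, c x y ↔ tidRelP x y := by
  have hc' := hc.isCongruenceOn_Ici
  obtain ⟨⟨x, y, hrel, hne⟩, -⟩ := hnt
  refine (hc'.rel_diag_or_rel_iff_tidRel (isUpperSet_Ici 1) harch
    ⟨x.1, y.1, x.2, y.2, liftRel_iff.2 hrel, fun h => hne (Subtype.ext h)⟩).imp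
    (fun hdiag => ?_) fun hiff x y => liftRel_iff.symm.trans (hiff x.1 y.1 x.2 y.2)
  have hgrp (x : PosT G) :=
    hc'.identity_inverse_of_rel_diag hdiag (Set.mem_Ici.2 le_rfl) (g := x.1.1) (h := x.1.2.1)
      (s := x.1.2.2) x.2.1 x.2.2
  refine ⟨⟨(1, 1, true), le_rfl, le_rfl⟩, fun x => ?_,
    fun x => ⟨⟨(x.1.2.1, x.1.1, true), x.2.2, x.2.1⟩, ?_⟩⟩
  · exact ⟨liftRel_iff.1 (hgrp x).1.1, liftRel_iff.1 (hgrp x).1.2⟩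
  · exact ⟨liftRel_iff.1 (hgrp x).2.1, liftRel_iff.1 (hgrp x).2.2⟩

theorem exists_surjective_TmulP_hom_SmulP :
    ∃ f : PosT G → PosS G, Function.Surjective f ∧
      (∀ x y, f (TmulP x y) = SmulP (f x) (f y)) ∧ ∀ x y, f x = f y ↔ tidRelP x y :=
  ⟨fun x => ⟨(x.1.1, x.1.2.1), x.2⟩, fun p => ⟨⟨(p.1.1, p.1.2, true), p.2⟩, rfl⟩,
    fun x y => Subtype.ext (Smul_fst_snd_Tmul x.1 y.1).symm,
    fun _ _ => Subtype.ext_iff.trans Prod.ext_iff⟩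

/-- The isomorphism `T_G/𝔠 ≅ S_G` is expressed by a surjective homomorphism onto `S_G` whose
fibres are the `𝔠`-classes. -/
theorem stmt15 {G : Type*} [Group G] [LinearOrder G]
    [CovariantClass G G (· * ·) (· ≤ ·)]
    [CovariantClass G G (Function.swap (· * ·)) (· ≤ ·)]
    (harch : IsArchGroup G)
    (hd : ∀ g : G, 1 < g → ∃ x : G, 1 < x ∧ x < g) :
    (∀ c : (G × G × Bool) → (G × G × Bool) → Prop,
      IsSgCongruence (Tmul (G := G)) c → IsNontrivialRel c →
        IsGroupCongruence (Tmul (G := G)) c ∨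
          ((∀ x y, c x y ↔ tidRel x y) ∧
            ∃ f : G × G × Bool → G × G, Function.Surjective f ∧
              (∀ x y, f (Tmul x y) = Smul (f x) (f y)) ∧ ∀ x y, f x = f y ↔ c x y)) ∧
    (∀ c : PosT G → PosT G → Prop,
      IsSgCongruence (TmulP (G := G)) c → IsNontrivialRel c →
        IsGroupCongruence (TmulP (G := G)) c ∨
          ((∀ x y, c x y ↔ tidRelP x y) ∧
            ∃ f : PosT G → PosS G, Function.Surjective f ∧
              (∀ x y, f (TmulP x y) = SmulP (f x) (f y)) ∧ ∀ x y, f x = f y ↔ c x y)) := by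
  have : DenselyOrdered G := denselyOrdered_of_forall_one_lt hd
  refine ⟨fun c hc hnt => ?_, fun c hc hnt => ?_⟩
  · refine (hc.isGroupCongruence_or_eq_tidRel harch hnt).imp_right fun hiff => ⟨hiff, ?_⟩
    obtain ⟨f, hsurj, hhom, hfib⟩ := exists_surjective_Tmul_hom_Smul (G := G)
    exact ⟨f, hsurj, hhom, fun x y => (hfib x y).trans (hiff x y).symm⟩
  · refine (hc.isGroupCongruence_or_eq_tidRelP harch hnt).imp_right fun hiff => ⟨hiff, ?_⟩
    obtain ⟨f, hsurj, hhom, hfib⟩ := exists_surjective_TmulP_hom_SmulP (G := G)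
    exact ⟨f, hsurj, hhom, fun x y => (hfib x y).trans (hiff x y).symm⟩
end

section
/- Let G be an archimedean linearly ordered group and 𝔠_mg the least group congruence on S_G (given by x 𝔠_mg y iff x·z = y·z for some idempotent z of S_G). Then the quotient S_G/𝔠_mg is isomorphic, as a group, to G. The same holds for S_G⁺: the quotient S_G⁺/𝔠_mg is isomorphic to G. -/
variable {G : Type*} [Group G] [LinearOrder G]
  [CovariantClass G G (· * ·) (· ≤ ·)] [CovariantClass G G (Function.swap (· * ·)) (· ≤ ·)]

/-- The least group congruence `𝔠_mg` on `S_G`: `x 𝔠_mg y` iff `x·z = y·z` for some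
idempotent `z`. -/
def cmgS (x y : G × G) : Prop := ∃ z : G × G, Smul z z = z ∧ Smul x z = Smul y z

/-- The least group congruence `𝔠_mg` on `S_G⁺`. -/
def cmgSP (x y : PosS G) : Prop := ∃ z : PosS G, SmulP z z = z ∧ SmulP x z = SmulP y z

/-!
The map `(a, b) ↦ a⁻¹ * b` is a homomorphism from `S_G` onto `G`. It sends every idempotent
to `1`, so elements related by `𝔠_mg` have the same image. Conversely, the diagonal pairs
`(t, t)` are idempotents, and if `t` dominates the second coordinates of `x` and `y` then
`x · (t, t) = (t * x.2⁻¹ * x.1, t)`, which only depends on the image of `x`; taking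
`t = max x.2 y.2` (which lies in `G⁺` when `x` and `y` do) shows that elements with the same
image are `𝔠_mg`-related, in `S_G` and in `S_G⁺` alike.
-/

section

variable {α : Type*} [Group α]

def toGroup (p : α × α) : α := p.1⁻¹ * p.2

theorem toGroup_surjective : Function.Surjective (toGroup : α × α → α) :=
  fun g => ⟨(1, g), by simp [toGroup]⟩

variable [LinearOrder α]

theorem toGroup_Smul (x y : α × α) : toGroup (Smul x y) = toGroup x * toGroup y := by
  unfold Smul toGroup
  split_ifs with hlt heq
  · simp [mul_assoc]
  · rw [heq]; group
  · group

theorem toGroup_eq_one_of_Smul_self {z : α × α} (hz : Smul z z = z) : toGroup z = 1 := by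
  have h := toGroup_Smul z z
  rw [hz] at h
  exact mul_eq_left.mp h.symm

theorem toGroup_eq_of_Smul_eq {x y z : α × α} (hz : Smul z z = z) (h : Smul x z = Smul y z) :
    toGroup x = toGroup y := by
  simpa [toGroup_Smul, toGroup_eq_one_of_Smul_self hz] using congrArg toGroup h

theorem Smul_diag_self (t : α) : Smul (t, t) (t, t) = (t, t) := by
  simp [Smul]

theorem Smul_diag_of_snd_le (x : α × α) {t : α} (h : x.2 ≤ t) :
    Smul x (t, t) = (t * x.2⁻¹ * x.1, t) := by
  rcases h.lt_or_eq with h | rfl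
  · simp [Smul, h]
  · simp [Smul]

theorem Smul_diag_eq_of_toGroup_eq {x y : α × α} (h : toGroup x = toGroup y) {t : α}
    (hx : x.2 ≤ t) (hy : y.2 ≤ t) : Smul x (t, t) = Smul y (t, t) := by
  have h' : x.2⁻¹ * x.1 = y.2⁻¹ * y.1 := by
    simpa [toGroup] using congrArg (·⁻¹) h
  rw [Smul_diag_of_snd_le x hx, Smul_diag_of_snd_le y hy, mul_assoc, mul_assoc, h']

theorem toGroup_eq_iff_cmgS (x y : α × α) : toGroup x = toGroup y ↔ cmgS x y := by
  refine ⟨fun h => ?_, fun ⟨z, hz, hxz⟩ => toGroup_eq_of_Smul_eq hz hxz⟩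
  exact ⟨(max x.2 y.2, max x.2 y.2), Smul_diag_self _,
    Smul_diag_eq_of_toGroup_eq h (le_max_left _ _) (le_max_right _ _)⟩

theorem exists_posS_toGroup_eq [CovariantClass α α (· * ·) (· ≤ ·)] (g : α) :
    ∃ p : PosS α, toGroup p.1 = g := by
  rcases le_total 1 g with h | h
  · exact ⟨⟨(1, g), le_rfl, h⟩, by simp [toGroup]⟩
  · exact ⟨⟨(g⁻¹, 1), one_le_inv'.mpr h, le_rfl⟩, by simp [toGroup]⟩

end

theorem toGroup_eq_iff_cmgSP (x y : PosS G) : toGroup x.1 = toGroup y.1 ↔ cmgSP x y := by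
  refine ⟨fun h => ?_, fun ⟨z, hz, hxz⟩ =>
    toGroup_eq_of_Smul_eq (congrArg Subtype.val hz) (congrArg Subtype.val hxz)⟩
  have ht : (1 : G) ≤ max x.1.2 y.1.2 := x.2.2.trans (le_max_left _ _)
  exact ⟨⟨(max x.1.2 y.1.2, max x.1.2 y.1.2), ht, ht⟩, Subtype.ext (Smul_diag_self _),
    Subtype.ext (Smul_diag_eq_of_toGroup_eq h (le_max_left _ _) (le_max_right _ _))⟩

theorem stmt18_general {G : Type*} [Group G] [LinearOrder G]
    [CovariantClass G G (· * ·) (· ≤ ·)]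
    [CovariantClass G G (Function.swap (· * ·)) (· ≤ ·)] :
    (∃ f : G × G → G, Function.Surjective f ∧
      (∀ x y : G × G, f (Smul x y) = f x * f y) ∧
      ∀ x y : G × G, f x = f y ↔ cmgS x y) ∧
    (∃ f : PosS G → G, Function.Surjective f ∧
      (∀ x y : PosS G, f (SmulP x y) = f x * f y) ∧
      ∀ x y : PosS G, f x = f y ↔ cmgSP x y) :=
  ⟨⟨toGroup, toGroup_surjective, toGroup_Smul, toGroup_eq_iff_cmgS⟩,
    ⟨fun p => toGroup p.1, exists_posS_toGroup_eq, fun x y => toGroup_Smul x.1 y.1,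
      toGroup_eq_iff_cmgSP⟩⟩

/-- For an archimedean linearly ordered group `G`, the quotient `S_G/𝔠_mg` is isomorphic
(as a group) to `G`, and likewise `S_G⁺/𝔠_mg` is isomorphic to `G`: there is a surjective
homomorphism onto `G` whose fibres are exactly the `𝔠_mg`-classes. -/
theorem stmt18 {G : Type*} [Group G] [LinearOrder G]
    [CovariantClass G G (· * ·) (· ≤ ·)]
    [CovariantClass G G (Function.swap (· * ·)) (· ≤ ·)]
    (harch : IsArchGroup G) :
    (∃ f : G × G → G, Function.Surjective f ∧
      (∀ x y : G × G, f (Smul x y) = f x * f y) ∧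
      ∀ x y : G × G, f x = f y ↔ cmgS x y) ∧
    (∃ f : PosS G → G, Function.Surjective f ∧
      (∀ x y : PosS G, f (SmulP x y) = f x * f y) ∧
      ∀ x y : PosS G, f x = f y ↔ cmgSP x y) :=
  stmt18_general
end
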